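/- arXiv:2204.03553 — 2 statements merged into one kernel-verified Lean document; each statement's English description precedes it below -/
import Mathlib

section
/- Let X, Y ⊆ ω. There exists an embedding of pcas of K2^X into K2^Y if and only if X is Turing reducible to Y. -/
namespace PCAEmb

/-! ### Oracle computability -/

/-- Codes for partial functions computable relative to an oracle. -/
inductive OCode : Type
  | zero : OCode
  | succ : OCode
  | left : OCode
  | right : OCode
  | oracle : OCode
  | pair : OCode → OCode → OCode
  | comp : OCode → OCode → OCode
  | prec : OCode → OCode → OCode
  | rfind' : OCode → OCode

/-- Evaluation of an oracle code, relative to a (partial) oracle `O`. -/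
def evalo (O : ℕ →. ℕ) : OCode → ℕ →. ℕ
  | .zero => pure 0
  | .succ => Nat.succ
  | .left => ↑fun n : ℕ => n.unpair.1
  | .right => ↑fun n : ℕ => n.unpair.2
  | .oracle => O
  | .pair cf cg => fun n => Nat.pair <$> evalo O cf n <*> evalo O cg n
  | .comp cf cg => fun n => evalo O cg n >>= evalo O cf
  | .prec cf cg =>
      Nat.unpaired fun a n =>
        n.rec (evalo O cf a) fun y IH => do
          let i ← IH
          evalo O cg (Nat.pair a (Nat.pair y i))
  | .rfind' cf =>
      Nat.unpaired fun a m =>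
        (Nat.rfind fun n => (fun x => x = 0) <$> evalo O cf (Nat.pair a (n + m))).map (· + m)

/-- The standard numbering of oracle codes. -/
def OCode.ofNat : ℕ → OCode
  | 0 => .zero
  | 1 => .succ
  | 2 => .left
  | 3 => .right
  | 4 => .oracle
  | n + 5 =>
    match n % 4 with
    | 0 => .pair (OCode.ofNat (n / 4).unpair.1) (OCode.ofNat (n / 4).unpair.2)
    | 1 => .comp (OCode.ofNat (n / 4).unpair.1) (OCode.ofNat (n / 4).unpair.2)
    | 2 => .prec (OCode.ofNat (n / 4).unpair.1) (OCode.ofNat (n / 4).unpair.2)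
    | _ => .rfind' (OCode.ofNat (n / 4).unpair.1)
  decreasing_by
    all_goals
      have h1 := Nat.unpair_left_le (n / 4)
      have h2 := Nat.unpair_right_le (n / 4)
      have h3 := Nat.div_le_self n 4
      omega

/-- The `e`-th Turing functional with oracle `O` : `Φ_e^O`. -/
def phi (O : ℕ →. ℕ) (e : ℕ) : ℕ →. ℕ := evalo O (OCode.ofNat e)

/-- The characteristic function of a set of naturals, as a (total) partial function. -/
noncomputable def chi (X : Set ℕ) : ℕ →. ℕ :=
  fun n => Part.some (X.indicator (fun _ => 1) n)

/-- `ψ` is partial computable relative to the oracle `O`. -/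
def RecursiveIn (O : ℕ →. ℕ) (ψ : ℕ →. ℕ) : Prop := ∃ c : OCode, evalo O c = ψ

/-- Turing reducibility of sets of naturals. -/
def TuringLE (X Y : Set ℕ) : Prop := RecursiveIn (chi Y) (chi X)

/-- A total function `d : ℕ → ℕ` is `Y`-computable. -/
def ComputableIn (Y : Set ℕ) (d : ℕ → ℕ) : Prop :=
  RecursiveIn (chi Y) (fun n => Part.some (d n))

/-- A binary relation on `ℕ` is `Y`-c.e. -/
def CEIn (Y : Set ℕ) (R : ℕ → ℕ → Prop) : Prop :=
  ∃ c : OCode, ∀ n m, R n m ↔ (evalo (chi Y) c (Nat.pair n m)).Dom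

/-- A set `W ⊆ ℕ` is `Y`-c.e. -/
def CE1In (Y : Set ℕ) (W : Set ℕ) : Prop :=
  ∃ c : OCode, ∀ n, n ∈ W ↔ (evalo (chi Y) c n).Dom

/-- The canonical finite set `D_u` with code `u` (binary coding). -/
def Du (u : ℕ) : Set ℕ := {k | u.testBit k}

/-- Enumeration reducibility: `Z ≤ₑ Y`. -/
def EnumLE (Z Y : Set ℕ) : Prop :=
  ∃ W : Set ℕ, CE1In ∅ W ∧ ∀ x, x ∈ Z ↔ ∃ u, Nat.pair x u ∈ W ∧ Du u ⊆ Y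

/-- The Turing jump `X'` of a set `X`. -/
def jump (X : Set ℕ) : Set ℕ := {e | (phi (chi X) e e).Dom}

/-- The halting set `K = {e : φ_e(e)↓}`. -/
def Khalt : Set ℕ := jump ∅

/-! ### Partial combinatory algebras -/

/-- `k·a·b` as a partial element. -/
def app2 {α : Type*} (app : α → α → Part α) (a b c : α) : Part α :=
  (app a b).bind fun x => app x c

/-- `s·a·b·c` as a partial element. -/
def app3 {α : Type*} (app : α → α → Part α) (a b c d : α) : Part α :=
  (app2 app a b c).bind fun x => app x d

/-- A partial applicative structure is a pca if it has (distinct) combinators `s` and `k`. -/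
def IsPCA {α : Type*} (app : α → α → Part α) : Prop :=
  ∃ s k : α, s ≠ k ∧
    (∀ a b : α, app2 app k a b = Part.some a) ∧
    (∀ a b : α, (app2 app s a b).Dom) ∧
    (∀ a b c : α,
      app3 app s a b c = (app a c).bind fun x => (app b c).bind fun y => app x y)

/-- An embedding of partial combinatory algebras: an injection that preserves
(defined) application. -/
def IsPCAEmbedding {α β : Type*} (appA : α → α → Part α) (appB : β → β → Part β)
    (f : α → β) : Prop :=
  Function.Injective f ∧ ∀ a a' c : α, c ∈ appA a a' → f c ∈ appB (f a) (f a')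

/-! ### Partial numberings -/

/-- `γ : ℕ ⇀ α` is a partial numbering (i.e. surjective). -/
def IsNumbering {α : Type*} (γ : ℕ →. α) : Prop := ∀ a : α, ∃ n, a ∈ γ n

/-- `d` is an `(a⊥, a⊤)`-decider for `X` with respect to `γ`. -/
def IsDecider {α : Type*} (γ : ℕ →. α) (abot atop : α) (X : Set ℕ) (d : ℕ → ℕ) : Prop :=
  ∀ n, (n ∉ X → γ (d n) = Part.some abot) ∧ (n ∈ X → γ (d n) = Part.some atop)

/-- `γ` has `Y`-c.e. inequivalence. -/
def CEInequiv {α : Type*} (Y : Set ℕ) (γ : ℕ →. α) : Prop :=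
  ∃ R : ℕ → ℕ → Prop, CEIn Y R ∧
    ∀ n m, (γ n).Dom → (γ m).Dom → (R n m ↔ γ n ≠ γ m)

/-- `γ` is a `Y`-effectively pca-valued partial numbering: the application is
represented on codes by a partial `Y`-computable function `ψ`. -/
def EffValued {α : Type*} (Y : Set ℕ) (app : α → α → Part α) (γ : ℕ →. α) : Prop :=
  ∃ ψ : ℕ →. ℕ, RecursiveIn (chi Y) ψ ∧
    ∀ (n m : ℕ) (a b c : α), a ∈ γ n → b ∈ γ m → c ∈ app a b →
      ∃ j, j ∈ ψ (Nat.pair n m) ∧ c ∈ γ j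

/-- `γ` is a strongly `Y`-effectively pca-valued partial numbering. -/
def StrongEffValued {α : Type*} (Y : Set ℕ) (app : α → α → Part α) (γ : ℕ →. α) : Prop :=
  ∃ ψ : ℕ →. ℕ, RecursiveIn (chi Y) ψ ∧
    (∀ (n m : ℕ) (a b c : α), a ∈ γ n → b ∈ γ m → c ∈ app a b →
      ∃ j, j ∈ ψ (Nat.pair n m) ∧ c ∈ γ j) ∧
    (∀ (n m k l : ℕ) (a b a' b' c : α), a ∈ γ n → b ∈ γ m → a' ∈ γ k → b' ∈ γ l →
      c ∈ app a b → c ∈ app a' b' → ψ (Nat.pair n m) = ψ (Nat.pair k l))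

/-! ### The models -/

/-- Kleene's first model relativized to `X`: application `n · m = Φ_n^X(m)`. -/
noncomputable def k1App (X : Set ℕ) : ℕ → ℕ → Part ℕ := fun n m => phi (chi X) n m

/-- A total function as a partial function. -/
def toPFun (g : ℕ → ℕ) : ℕ →. ℕ := fun n => Part.some (g n)

/-- Join `f ⊕ g` of two partial functions. -/
def pjoin (f g : ℕ →. ℕ) : ℕ →. ℕ := fun n =>
  if n % 2 = 0 then f (n / 2) else g (n / 2)

/-- The totalization of a partial function, as a partial element of `ℕ → ℕ`:
defined iff `ψ` is total. -/
def partToTotal (ψ : ℕ →. ℕ) : Part (ℕ → ℕ) :=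
  ⟨∀ n, (ψ n).Dom, fun H n => (ψ n).get (H n)⟩

/-- Application in Kleene's second model `K₂`: `g · h = Φ^{g⊕h}_{g 0}`,
defined iff this function is total. -/
def k2App (g h : ℕ → ℕ) : Part (ℕ → ℕ) :=
  partToTotal (phi (pjoin (toPFun g) (toPFun h)) (g 0))

/-- Application in van Oosten's sequential model `B`: `θ · ρ = Φ^{θ⊕ρ}_{θ 0}`
(always defined, as a partial function). -/
def bApp (θ ρ : ℕ →. ℕ) : Part (ℕ →. ℕ) :=
  Part.some (fun n => (θ 0).bind fun e => phi (pjoin θ ρ) e n)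

/-- Restriction of a partial applicative structure to a subset. -/
def subApp {α : Type*} (app : α → α → Part α) (P : α → Prop)
    (a b : Subtype P) : Part (Subtype P) :=
  (app a.1 b.1).bind fun c => Part.assert (P c) fun h => Part.some ⟨c, h⟩

/-- Carrier of `K₂^X` : the total `X`-computable functions. -/
def K2el (X : Set ℕ) : Type := {g : ℕ → ℕ // RecursiveIn (chi X) (toPFun g)}

/-- Application in `K₂^X`. -/
def k2XApp (X : Set ℕ) : K2el X → K2el X → Part (K2el X) :=
  subApp k2App _

/-- Carrier of `B^X` : the partial `X`-computable functions. -/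
def Bel (X : Set ℕ) : Type := {θ : ℕ →. ℕ // RecursiveIn (chi X) θ}

/-- Application in `B^X`. -/
def bXApp (X : Set ℕ) : Bel X → Bel X → Part (Bel X) :=
  subApp bApp _

/-- Application in Scott's graph model `G`. -/
def gApp (A B : Set ℕ) : Part (Set ℕ) :=
  Part.some {n | ∃ u, Nat.pair n u ∈ A ∧ Du u ⊆ B}

/-- Carrier of `G^Z` : the sets enumeration-reducible to `Z`. -/
def Gel (Z : Set ℕ) : Type := {A : Set ℕ // EnumLE A Z}

/-- Application in `G^Z`. -/
def gXApp (Z : Set ℕ) : Gel Z → Gel Z → Part (Gel Z) :=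
  subApp gApp _

/-- `X ⊕ X̄ = {2n : n ∈ X} ∪ {2n+1 : n ∉ X}`. -/
def joinCompl (X : Set ℕ) : Set ℕ :=
  {k | ∃ n, (k = 2 * n ∧ n ∈ X) ∨ (k = 2 * n + 1 ∧ n ∉ X)}

/-! ### The λ-calculus -/

/-- Untyped λ-terms (de Bruijn representation). -/
inductive Lam : Type
  | var : ℕ → Lam
  | app : Lam → Lam → Lam
  | abs : Lam → Lam

/-- Lift (shift up) the free variables `≥ d` of a term. -/
def Lam.lift : Lam → ℕ → Lam
  | .var n, d => if n < d then .var n else .var (n + 1)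
  | .app M N, d => .app (M.lift d) (N.lift d)
  | .abs M, d => .abs (M.lift (d + 1))

/-- Substitution `M[k := N]` (de Bruijn). -/
def Lam.subst : Lam → ℕ → Lam → Lam
  | .var n, k, N => if n = k then N else if k < n then .var (n - 1) else .var n
  | .app M M', k, N => .app (M.subst k N) (M'.subst k N)
  | .abs M, k, N => .abs (M.subst (k + 1) (N.lift 0))

/-- β-equivalence of λ-terms. -/
inductive BetaEq : Lam → Lam → Prop
  | beta (M N : Lam) : BetaEq (.app (.abs M) N) (M.subst 0 N)
  | refl (M : Lam) : BetaEq M M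
  | symm {M N : Lam} : BetaEq M N → BetaEq N M
  | trans {M N P : Lam} : BetaEq M N → BetaEq N P → BetaEq M P
  | appCongr {M M' N N' : Lam} :
      BetaEq M M' → BetaEq N N' → BetaEq (.app M N) (.app M' N')
  | absCongr {M M' : Lam} : BetaEq M M' → BetaEq (.abs M) (.abs M')

/-- βη-equivalence of λ-terms. -/
inductive BetaEtaEq : Lam → Lam → Prop
  | beta (M N : Lam) : BetaEtaEq (.app (.abs M) N) (M.subst 0 N)
  | eta (M : Lam) : BetaEtaEq (.abs (.app (M.lift 0) (.var 0))) M
  | refl (M : Lam) : BetaEtaEq M M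
  | symm {M N : Lam} : BetaEtaEq M N → BetaEtaEq N M
  | trans {M N P : Lam} : BetaEtaEq M N → BetaEtaEq N P → BetaEtaEq M P
  | appCongr {M M' N N' : Lam} :
      BetaEtaEq M M' → BetaEtaEq N N' → BetaEtaEq (.app M N) (.app M' N')
  | absCongr {M M' : Lam} : BetaEtaEq M M' → BetaEtaEq (.abs M) (.abs M')

def lamBetaSetoid : Setoid Lam := ⟨BetaEq, ⟨BetaEq.refl, BetaEq.symm, BetaEq.trans⟩⟩

def lamBetaEtaSetoid : Setoid Lam :=
  ⟨BetaEtaEq, ⟨BetaEtaEq.refl, BetaEtaEq.symm, BetaEtaEq.trans⟩⟩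

/-- The pca `λ` of λ-terms modulo β-equivalence. -/
def LamBeta : Type := Quotient lamBetaSetoid

/-- The pca `λη` of λ-terms modulo βη-equivalence. -/
def LamBetaEta : Type := Quotient lamBetaEtaSetoid

/-- Application in `λ` (total). -/
def lamBetaApp : LamBeta → LamBeta → Part LamBeta := fun a b =>
  Part.some (Quotient.map₂ Lam.app (fun _ _ h1 _ _ h2 => BetaEq.appCongr h1 h2) a b)

/-- Application in `λη` (total). -/
def lamBetaEtaApp : LamBetaEta → LamBetaEta → Part LamBetaEta := fun a b =>
  Part.some (Quotient.map₂ Lam.app (fun _ _ h1 _ _ h2 => BetaEtaEq.appCongr h1 h2) a b)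



/-! ### Stage 1 : basic lemmas on `evalo` and `RecursiveIn` -/

section Stage1

@[simp] lemma evalo_zero (O : ℕ →. ℕ) : evalo O .zero = pure 0 := rfl
@[simp] lemma evalo_succ (O : ℕ →. ℕ) : evalo O .succ = ↑Nat.succ := rfl
@[simp] lemma evalo_left (O : ℕ →. ℕ) : evalo O .left = ↑fun n : ℕ => n.unpair.1 := rfl
@[simp] lemma evalo_right (O : ℕ →. ℕ) : evalo O .right = ↑fun n : ℕ => n.unpair.2 := rfl
@[simp] lemma evalo_oracle (O : ℕ →. ℕ) : evalo O .oracle = O := rfl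
@[simp] lemma evalo_pair (O : ℕ →. ℕ) (cf cg : OCode) :
    evalo O (.pair cf cg) = fun n => Nat.pair <$> evalo O cf n <*> evalo O cg n := rfl
@[simp] lemma evalo_comp (O : ℕ →. ℕ) (cf cg : OCode) :
    evalo O (.comp cf cg) = fun n => evalo O cg n >>= evalo O cf := rfl
@[simp] lemma evalo_prec (O : ℕ →. ℕ) (cf cg : OCode) :
    evalo O (.prec cf cg) =
      Nat.unpaired fun a n =>
        n.rec (evalo O cf a) fun y IH =>
          IH >>= fun i => evalo O cg (Nat.pair a (Nat.pair y i)) := rfl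
@[simp] lemma evalo_rfind' (O : ℕ →. ℕ) (cf : OCode) :
    evalo O (.rfind' cf) =
      Nat.unpaired fun a m =>
        (Nat.rfind fun n => (fun x => x = 0) <$> evalo O cf (Nat.pair a (n + m))).map
          (· + m) := rfl

/-- Numeric code of an `OCode`. -/
def encodeOCode : OCode → ℕ
  | .zero => 0
  | .succ => 1
  | .left => 2
  | .right => 3
  | .oracle => 4
  | .pair cf cg => 4 * Nat.pair (encodeOCode cf) (encodeOCode cg) + 0 + 5
  | .comp cf cg => 4 * Nat.pair (encodeOCode cf) (encodeOCode cg) + 1 + 5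
  | .prec cf cg => 4 * Nat.pair (encodeOCode cf) (encodeOCode cg) + 2 + 5
  | .rfind' cf => 4 * Nat.pair (encodeOCode cf) (encodeOCode cf) + 3 + 5

lemma ofNat_encodeOCode : ∀ c : OCode, OCode.ofNat (encodeOCode c) = c := by
  intro c
  induction c <;> simp only [encodeOCode]
  case zero => rw [OCode.ofNat]
  case succ => rw [OCode.ofNat]
  case left => rw [OCode.ofNat]
  case right => rw [OCode.ofNat]
  case oracle => rw [OCode.ofNat]
  case pair cf cg ih1 ih2 =>
    rw [OCode.ofNat]
    simp [Nat.mul_add_mod, Nat.mul_add_div, ih1, ih2]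
  case comp cf cg ih1 ih2 =>
    rw [OCode.ofNat]
    simp [Nat.mul_add_mod, Nat.mul_add_div, ih1, ih2]
  case prec cf cg ih1 ih2 =>
    rw [OCode.ofNat]
    simp [Nat.mul_add_mod, Nat.mul_add_div, ih1, ih2]
  case rfind' cf ih =>
    rw [OCode.ofNat]
    simp [Nat.mul_add_mod, Nat.mul_add_div, ih]

/-- Translation of ordinary partial recursive codes into oracle codes. -/
def toOCode : Nat.Partrec.Code → OCode
  | .zero => .zero
  | .succ => .succ
  | .left => .left
  | .right => .right
  | .pair cf cg => .pair (toOCode cf) (toOCode cg)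
  | .comp cf cg => .comp (toOCode cf) (toOCode cg)
  | .prec cf cg => .prec (toOCode cf) (toOCode cg)
  | .rfind' cf => .rfind' (toOCode cf)

lemma evalo_toOCode (O : ℕ →. ℕ) : ∀ c : Nat.Partrec.Code, evalo O (toOCode c) = c.eval := by
  intro c
  induction c <;> simp [toOCode, evalo, Nat.Partrec.Code.eval, *] <;> rfl

theorem RecursiveIn.of_partrec {O f : ℕ →. ℕ} (h : Nat.Partrec f) : RecursiveIn O f := by
  obtain ⟨c, hc⟩ := Nat.Partrec.Code.exists_code.mp h
  exact ⟨toOCode c, by rw [evalo_toOCode, hc]⟩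

theorem RecursiveIn.oracle {O : ℕ →. ℕ} : RecursiveIn O O := ⟨.oracle, rfl⟩

theorem RecursiveIn.of_eq {O f g : ℕ →. ℕ} (hf : RecursiveIn O f) (h : ∀ n, f n = g n) :
    RecursiveIn O g := by
  obtain ⟨c, hc⟩ := hf
  exact ⟨c, by rw [hc]; exact funext h⟩

theorem RecursiveIn.bind {O f g : ℕ →. ℕ} (hf : RecursiveIn O f) (hg : RecursiveIn O g) :
    RecursiveIn O fun n => f n >>= g := by
  obtain ⟨cf, hcf⟩ := hf; obtain ⟨cg, hcg⟩ := hg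
  exact ⟨.comp cg cf, by simp [hcf, hcg]; rfl⟩

theorem RecursiveIn.pair {O f g : ℕ →. ℕ} (hf : RecursiveIn O f) (hg : RecursiveIn O g) :
    RecursiveIn O fun n => Nat.pair <$> f n <*> g n := by
  obtain ⟨cf, hcf⟩ := hf; obtain ⟨cg, hcg⟩ := hg
  exact ⟨.pair cf cg, by simp [hcf, hcg]; rfl⟩

theorem RecursiveIn.precr {O f g : ℕ →. ℕ} (hf : RecursiveIn O f) (hg : RecursiveIn O g) :
    RecursiveIn O (Nat.unpaired fun a n =>
      n.rec (f a) fun y IH => IH >>= fun i => g (Nat.pair a (Nat.pair y i))) := by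
  obtain ⟨cf, hcf⟩ := hf; obtain ⟨cg, hcg⟩ := hg
  exact ⟨.prec cf cg, by simp [hcf, hcg]; rfl⟩

theorem RecursiveIn.rfind'r {O f : ℕ →. ℕ} (hf : RecursiveIn O f) :
    RecursiveIn O (Nat.unpaired fun a m =>
      (Nat.rfind fun n => (fun x => x = 0) <$> f (Nat.pair a (n + m))).map (· + m)) := by
  obtain ⟨cf, hcf⟩ := hf
  exact ⟨.rfind' cf, by simp [hcf]; rfl⟩

/-- Substitute a code for the oracle. -/
def substOr : OCode → OCode → OCode
  | .zero, _ => .zero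
  | .succ, _ => .succ
  | .left, _ => .left
  | .right, _ => .right
  | .oracle, o => o
  | .pair cf cg, o => .pair (substOr cf o) (substOr cg o)
  | .comp cf cg, o => .comp (substOr cf o) (substOr cg o)
  | .prec cf cg, o => .prec (substOr cf o) (substOr cg o)
  | .rfind' cf, o => .rfind' (substOr cf o)

lemma evalo_substOr (O : ℕ →. ℕ) (o : OCode) :
    ∀ c : OCode, evalo O (substOr c o) = evalo (evalo O o) c := by
  intro c
  induction c <;> simp [substOr, evalo, *] <;> rfl

theorem RecursiveIn.trans {O O' f : ℕ →. ℕ} (hf : RecursiveIn O' f) (hO : RecursiveIn O O') :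
    RecursiveIn O f := by
  obtain ⟨c, hc⟩ := hf; obtain ⟨o, ho⟩ := hO
  exact ⟨substOr c o, by rw [evalo_substOr, ho, hc]⟩

end Stage1

/-! ### Stage 2 : monotonicity and compactness of `evalo` -/

section Stage2

/-- Pointwise inclusion of partial oracles. -/
def OLE (O₁ O₂ : ℕ →. ℕ) : Prop := ∀ q v, v ∈ O₁ q → v ∈ O₂ q

universe upcab

lemma mem_fmap_iff {α β : Type upcab} (f : α → β) {o : Part α} {b : β} :
    b ∈ f <$> o ↔ ∃ a ∈ o, f a = b := by
  rw [Part.map_eq_map, Part.mem_map_iff]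

lemma part_seq_eq {α β : Type upcab} (f : Part (α → β)) (x : Part α) :
    f <*> x = f.bind fun g => x.map g := rfl

lemma mem_pairseq {x y : Part ℕ} {v : ℕ} :
    v ∈ (Nat.pair <$> x <*> y) ↔ ∃ a ∈ x, ∃ b ∈ y, v = Nat.pair a b := by
  rw [part_seq_eq, Part.map_eq_map]
  simp only [Part.mem_bind_iff, Part.mem_map_iff]
  constructor
  · rintro ⟨g, ⟨a, ha, rfl⟩, b, hb, rfl⟩
    exact ⟨a, ha, b, hb, rfl⟩
  · rintro ⟨a, ha, b, hb, rfl⟩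
    exact ⟨Nat.pair a, ⟨a, ha, rfl⟩, b, hb, rfl⟩

lemma evalo_prec_zero (O : ℕ →. ℕ) (cf cg : OCode) (a : ℕ) :
    evalo O (.prec cf cg) (Nat.pair a 0) = evalo O cf a := by
  simp [evalo, Nat.unpaired]

lemma evalo_prec_succ (O : ℕ →. ℕ) (cf cg : OCode) (a m : ℕ) :
    evalo O (.prec cf cg) (Nat.pair a (m + 1)) =
      evalo O (.prec cf cg) (Nat.pair a m) >>= fun i =>
        evalo O cg (Nat.pair a (Nat.pair m i)) := by
  simp [evalo, Nat.unpaired]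

lemma fmap_mem_mono {O₁ O₂ : ℕ →. ℕ} (h : OLE O₁ O₂)
    {c : OCode} (hmono : ∀ (n x : ℕ), x ∈ evalo O₁ c n → x ∈ evalo O₂ c n)
    {f : ℕ → Bool} {y : ℕ} {b : Bool}
    (hb : b ∈ f <$> evalo O₁ c y) : b ∈ f <$> evalo O₂ c y := by
  rcases (mem_fmap_iff _).1 hb with ⟨v, hv, rfl⟩
  exact (mem_fmap_iff _).2 ⟨v, hmono y v hv, rfl⟩

lemma evalo_mono {O₁ O₂ : ℕ →. ℕ} (h : OLE O₁ O₂) :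
    ∀ (c : OCode) (n x : ℕ), x ∈ evalo O₁ c n → x ∈ evalo O₂ c n := by
  intro c
  induction c with
  | zero => intro n x hx; exact hx
  | succ => intro n x hx; exact hx
  | left => intro n x hx; exact hx
  | right => intro n x hx; exact hx
  | oracle => intro n x hx; exact h n x hx
  | pair cf cg ihf ihg =>
    intro n x hx
    simp only [evalo_pair] at hx ⊢
    rcases mem_pairseq.1 hx with ⟨a, ha, b, hb, rfl⟩
    exact mem_pairseq.2 ⟨a, ihf _ _ ha, b, ihg _ _ hb, rfl⟩
  | comp cf cg ihf ihg =>
    intro n x hx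
    simp only [evalo_comp] at hx ⊢
    obtain ⟨a, ha, hb⟩ := Part.mem_bind_iff.1 hx
    exact Part.mem_bind_iff.2 ⟨a, ihg _ _ ha, ihf _ _ hb⟩
  | prec cf cg ihf ihg =>
    have key : ∀ (a m x : ℕ), x ∈ evalo O₁ (.prec cf cg) (Nat.pair a m) →
        x ∈ evalo O₂ (.prec cf cg) (Nat.pair a m) := by
      intro a m
      induction m with
      | zero => intro x hx; rw [evalo_prec_zero] at hx ⊢; exact ihf _ _ hx
      | succ m ih =>
        intro x hx
        rw [evalo_prec_succ] at hx ⊢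
        simp only [Part.bind_eq_bind, Part.mem_bind_iff] at hx ⊢
        obtain ⟨i, hi, hx⟩ := hx
        exact ⟨i, ih _ hi, ihg _ _ hx⟩
    intro n x hx
    have := key n.unpair.1 n.unpair.2 x
    rw [Nat.pair_unpair] at this
    exact this hx
  | rfind' cf ihf =>
    intro n x hx
    simp only [evalo_rfind', Nat.unpaired, Part.mem_map_iff] at hx ⊢
    obtain ⟨N, hN, rfl⟩ := hx
    refine ⟨N, ?_, rfl⟩
    replace hN := Nat.mem_rfind.1 hN
    obtain ⟨h0, hlt⟩ := hN
    exact Nat.mem_rfind.2 ⟨fmap_mem_mono h ihf h0, fun {k} hk => fmap_mem_mono h ihf (hlt hk)⟩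

/-- Oracle given by a finite table of optional values. -/
def otblL (L : List (Option ℕ)) : ℕ →. ℕ := fun q => Part.ofOption (L.getD q none)

/-- Initial segment of a total function, as a table. -/
def initsegO (g : ℕ → ℕ) (l : ℕ) : List (Option ℕ) := (List.range l).map fun j => some (g j)

lemma mem_otblL {L : List (Option ℕ)} {q v : ℕ} : v ∈ otblL L q ↔ L.getD q none = some v := by
  simp only [otblL, Part.mem_ofOption]
  exact ⟨fun h => by cases h' : L.getD q none <;> simp_all, fun h => by rw [h]; rfl⟩

lemma initsegO_getD {g : ℕ → ℕ} {l q : ℕ} (h : q < l) :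
    (initsegO g l).getD q none = some (g q) := by
  rw [initsegO, List.getD_eq_getElem?_getD, List.getElem?_map, List.getElem?_range h]
  rfl

lemma initsegO_getD_ge {g : ℕ → ℕ} {l q : ℕ} (h : l ≤ q) :
    (initsegO g l).getD q none = none := by
  rw [initsegO, List.getD_eq_getElem?_getD, List.getElem?_eq_none (by simpa using h)]
  rfl

lemma otblL_initseg_le (g : ℕ → ℕ) (l : ℕ) : OLE (otblL (initsegO g l)) (toPFun g) := by
  intro q v hv
  rw [mem_otblL] at hv
  rcases lt_or_ge q l with h | h
  · rw [initsegO_getD h] at hv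
    rw [toPFun, Part.mem_some_iff]
    exact (Option.some.inj hv).symm
  · rw [initsegO_getD_ge h] at hv; cases hv

lemma otblL_initseg_mono (g : ℕ → ℕ) {l₁ l₂ : ℕ} (h : l₁ ≤ l₂) :
    OLE (otblL (initsegO g l₁)) (otblL (initsegO g l₂)) := by
  intro q v hv
  rw [mem_otblL] at hv ⊢
  rcases lt_or_ge q l₁ with h' | h'
  · rw [initsegO_getD h'] at hv
    rw [initsegO_getD (h'.trans_le h)]
    exact hv
  · rw [initsegO_getD_ge h'] at hv; cases hv

lemma mem_otblL_initseg {g : ℕ → ℕ} {l q : ℕ} (h : q < l) :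
    g q ∈ otblL (initsegO g l) q := by
  rw [mem_otblL, initsegO_getD h]

lemma evalo_compact {g : ℕ → ℕ} :
    ∀ (c : OCode) (n x : ℕ), x ∈ evalo (toPFun g) c n →
      ∃ l, x ∈ evalo (otblL (initsegO g l)) c n := by
  intro c
  induction c with
  | zero => intro n x hx; exact ⟨0, hx⟩
  | succ => intro n x hx; exact ⟨0, hx⟩
  | left => intro n x hx; exact ⟨0, hx⟩
  | right => intro n x hx; exact ⟨0, hx⟩
  | oracle =>
    intro n x hx
    refine ⟨n + 1, ?_⟩
    have hxg : x = g n := by simpa [toPFun, Part.mem_some_iff] using hx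
    subst hxg
    exact mem_otblL_initseg (Nat.lt_succ_self n)
  | pair cf cg ihf ihg =>
    intro n x hx
    simp only [evalo_pair] at hx
    rcases mem_pairseq.1 hx with ⟨a, ha, b, hb, rfl⟩
    obtain ⟨l₁, ha'⟩ := ihf _ _ ha
    obtain ⟨l₂, hb'⟩ := ihg _ _ hb
    refine ⟨max l₁ l₂, ?_⟩
    simp only [evalo_pair]
    exact mem_pairseq.2 ⟨a, evalo_mono (otblL_initseg_mono g (le_max_left _ _)) _ _ _ ha',
      b, evalo_mono (otblL_initseg_mono g (le_max_right _ _)) _ _ _ hb', rfl⟩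
  | comp cf cg ihf ihg =>
    intro n x hx
    simp only [evalo_comp] at hx
    obtain ⟨a, ha, hb⟩ := Part.mem_bind_iff.1 hx
    obtain ⟨l₁, ha'⟩ := ihg _ _ ha
    obtain ⟨l₂, hb'⟩ := ihf _ _ hb
    refine ⟨max l₁ l₂, ?_⟩
    simp only [evalo_comp]
    exact Part.mem_bind_iff.2 ⟨a, evalo_mono (otblL_initseg_mono g (le_max_left _ _)) _ _ _ ha',
      evalo_mono (otblL_initseg_mono g (le_max_right _ _)) _ _ _ hb'⟩
  | prec cf cg ihf ihg =>
    have key : ∀ (a m x : ℕ), x ∈ evalo (toPFun g) (.prec cf cg) (Nat.pair a m) →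
        ∃ l, x ∈ evalo (otblL (initsegO g l)) (.prec cf cg) (Nat.pair a m) := by
      intro a m
      induction m with
      | zero =>
        intro x hx
        rw [evalo_prec_zero] at hx
        obtain ⟨l, hl⟩ := ihf _ _ hx
        exact ⟨l, by rw [evalo_prec_zero]; exact hl⟩
      | succ m ih =>
        intro x hx
        rw [evalo_prec_succ] at hx
        simp only [Part.bind_eq_bind, Part.mem_bind_iff] at hx
        obtain ⟨i, hi, hx⟩ := hx
        obtain ⟨l₁, hi'⟩ := ih _ hi
        obtain ⟨l₂, hx'⟩ := ihg _ _ hx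
        refine ⟨max l₁ l₂, ?_⟩
        rw [evalo_prec_succ]
        simp only [Part.bind_eq_bind, Part.mem_bind_iff]
        exact ⟨i, evalo_mono (otblL_initseg_mono g (le_max_left _ _)) _ _ _ hi',
          evalo_mono (otblL_initseg_mono g (le_max_right _ _)) _ _ _ hx'⟩
    intro n x hx
    have h1 := key n.unpair.1 n.unpair.2 x
    rw [Nat.pair_unpair] at h1
    exact h1 hx
  | rfind' cf ihf =>
    intro n x hx
    simp only [evalo_rfind', Nat.unpaired, Part.mem_map_iff] at hx
    obtain ⟨N, hN, rfl⟩ := hx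
    replace hN := Nat.mem_rfind.1 hN
    obtain ⟨h0, hlt⟩ := hN
    have H : ∀ k, k ≤ N → ∃ l b, (b = true ↔ k = N) ∧
        b ∈ ((fun x => x = 0) <$>
          evalo (otblL (initsegO g l)) cf (Nat.pair n.unpair.1 (k + n.unpair.2)) : Part Bool) := by
      intro k hk
      rcases eq_or_lt_of_le hk with rfl | hk'
      · rcases (mem_fmap_iff _).1 h0 with ⟨v, hv, hveq⟩
        obtain ⟨l, hl⟩ := ihf _ _ hv
        exact ⟨l, true, by simp, (mem_fmap_iff _).2 ⟨v, hl, hveq⟩⟩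
      · rcases (mem_fmap_iff _).1 (hlt hk') with ⟨v, hv, hveq⟩
        obtain ⟨l, hl⟩ := ihf _ _ hv
        exact ⟨l, false, by simp [Nat.ne_of_lt hk'], (mem_fmap_iff _).2 ⟨v, hl, hveq⟩⟩
    choose fl fb hfb hfm using H
    classical
    set L := (Finset.range (N + 1)).sup (fun k => if h : k ≤ N then fl k h else 0) with hL
    have big : ∀ k (hk : k ≤ N), fl k hk ≤ L := by
      intro k hk
      have hmem : k ∈ Finset.range (N + 1) := Finset.mem_range.mpr (Nat.lt_succ_of_le hk)
      have := Finset.le_sup (f := fun k => if h : k ≤ N then fl k h else 0) hmem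
      simpa [hk] using this
    refine ⟨L, ?_⟩
    simp only [evalo_rfind', Nat.unpaired, Part.mem_map_iff]
    refine ⟨N, ?_, rfl⟩
    refine Nat.mem_rfind.2 ?_
    constructor
    · have := fmap_mem_mono (otblL_initseg_mono g (big N le_rfl))
        (evalo_mono (otblL_initseg_mono g (big N le_rfl)) cf) (hfm N le_rfl)
      have hb : fb N le_rfl = true := (hfb N le_rfl).2 rfl
      rwa [hb] at this
    · intro k hk
      have := fmap_mem_mono (otblL_initseg_mono g (big k hk.le))
        (evalo_mono (otblL_initseg_mono g (big k hk.le)) cf) (hfm k hk.le)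
      have hb : fb k hk.le = false := by
        rcases Bool.eq_false_or_eq_true (fb k hk.le) with h | h
        · exact absurd ((hfb k hk.le).1 h) (Nat.ne_of_lt hk)
        · exact h

      rwa [hb] at this

end Stage2

/-! ### Stage 3 : `evalo` with a coded finite-table oracle is partial recursive -/

section Stage3

/-- The finite-table oracle with code `t`. -/
def otbl (t : ℕ) : ℕ →. ℕ := otblL (Denumerable.ofNat (List (Option ℕ)) t)

open Nat.Partrec (Code) in
theorem partrec_evalo_otbl : ∀ c : OCode, Partrec₂ fun t n => evalo (otbl t) c n := by
  intro c
  induction c with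
  | zero =>
    exact ((Partrec.const' (Part.some 0)).to₂ : Partrec₂ fun t n : ℕ => Part.some 0)
  | succ =>
    exact ((Computable.succ.comp Computable.snd).partrec.to₂ :
      Partrec₂ fun t n : ℕ => (Part.some n.succ : Part ℕ))
  | left =>
    exact (((Computable.fst.comp Computable.unpair).comp Computable.snd).partrec.to₂ :
      Partrec₂ fun t n : ℕ => (Part.some n.unpair.1 : Part ℕ))
  | right =>
    exact (((Computable.snd.comp Computable.unpair).comp Computable.snd).partrec.to₂ :
      Partrec₂ fun t n : ℕ => (Part.some n.unpair.2 : Part ℕ))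
  | oracle =>
    have h1 : Primrec fun p : ℕ × ℕ =>
        ((Denumerable.ofNat (List (Option ℕ)) p.1).getD p.2 none) :=
      Primrec₂.comp (f := fun (l : List (Option ℕ)) (n : ℕ) => l.getD n none)
        (Primrec.list_getD none) ((Primrec.ofNat (List (Option ℕ))).comp Primrec.fst)
        Primrec.snd
    exact (h1.to_comp.ofOption.to₂ : Partrec₂ fun t n : ℕ => otbl t n)
  | pair cf cg ihf ihg =>
    have base : Partrec fun x : (ℕ × ℕ) × ℕ => evalo (otbl x.1.1) cg x.1.2 :=
      ihg.comp (Computable.fst.comp Computable.fst) (Computable.snd.comp Computable.fst)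
    have inner : Partrec fun x : (ℕ × ℕ) × ℕ =>
        (evalo (otbl x.1.1) cg x.1.2).map fun b => Nat.pair x.2 b :=
      base.map (Primrec₂.natPair.to_comp.comp (Computable.snd.comp Computable.fst)
        Computable.snd).to₂
    have main : Partrec fun p : ℕ × ℕ =>
        (evalo (otbl p.1) cf p.2).bind fun a => (evalo (otbl p.1) cg p.2).map fun b =>
          Nat.pair a b := Partrec.bind ihf inner.to₂
    exact main.of_eq fun p => by simp only [evalo_pair, part_seq_eq, Part.map_eq_map, Part.bind_map]
  | comp cf cg ihf ihg =>
    have inner : Partrec fun x : (ℕ × ℕ) × ℕ => evalo (otbl x.1.1) cf x.2 :=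
      ihf.comp (Computable.fst.comp Computable.fst) Computable.snd
    have main : Partrec fun p : ℕ × ℕ =>
        (evalo (otbl p.1) cg p.2).bind fun a => evalo (otbl p.1) cf a :=
      Partrec.bind ihg inner.to₂
    exact main.of_eq fun p => by simp only [evalo_comp, Part.bind_eq_bind]; rfl
  | prec cf cg ihf ihg =>
    have hg : Partrec fun p : ℕ × ℕ => evalo (otbl p.1) cf p.2.unpair.1 :=
      ihf.comp Computable.fst (Computable.fst.comp (Computable.unpair.comp Computable.snd))
    have hh : Partrec fun x : (ℕ × ℕ) × ℕ × ℕ =>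
        evalo (otbl x.1.1) cg (Nat.pair x.1.2.unpair.1 (Nat.pair x.2.1 x.2.2)) :=
      ihg.comp (Computable.fst.comp Computable.fst)
        (Primrec₂.natPair.to_comp.comp
          (Computable.fst.comp (Computable.unpair.comp (Computable.snd.comp Computable.fst)))
          (Primrec₂.natPair.to_comp.comp (Computable.fst.comp Computable.snd)
            (Computable.snd.comp Computable.snd)))
    have main := Partrec.nat_rec
      (f := fun p : ℕ × ℕ => p.2.unpair.2) (g := fun p : ℕ × ℕ => evalo (otbl p.1) cf p.2.unpair.1)
      (h := fun (p : ℕ × ℕ) (yi : ℕ × ℕ) =>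
        evalo (otbl p.1) cg (Nat.pair p.2.unpair.1 (Nat.pair yi.1 yi.2)))
      ((Computable.snd.comp Computable.unpair).comp Computable.snd) hg hh.to₂
    exact main.of_eq fun p => by simp only [evalo_prec, Nat.unpaired, Part.bind_eq_bind]
  | rfind' cf ihf =>
    have harg : Computable fun x : (ℕ × ℕ) × ℕ =>
        Nat.pair x.1.2.unpair.1 (x.2 + x.1.2.unpair.2) :=
      Primrec₂.natPair.to_comp.comp
        (Computable.fst.comp (Computable.unpair.comp (Computable.snd.comp Computable.fst)))
        (Primrec.nat_add.to_comp.comp Computable.snd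
          (Computable.snd.comp (Computable.unpair.comp (Computable.snd.comp Computable.fst))))
    have hbase : Partrec fun x : (ℕ × ℕ) × ℕ =>
        evalo (otbl x.1.1) cf (Nat.pair x.1.2.unpair.1 (x.2 + x.1.2.unpair.2)) :=
      ihf.comp (Computable.fst.comp Computable.fst) harg
    have htest : Partrec fun x : (ℕ × ℕ) × ℕ =>
        ((fun v => v = 0) <$>
          evalo (otbl x.1.1) cf (Nat.pair x.1.2.unpair.1 (x.2 + x.1.2.unpair.2)) : Part Bool) := by
      have := hbase.map
        ((Primrec.eq.comp Primrec.snd (Primrec.const 0)).decide.to_comp.to₂ :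
          Computable₂ fun (_ : (ℕ × ℕ) × ℕ) (v : ℕ) => decide (v = 0))
      exact this.of_eq fun x => by rw [Part.map_eq_map]
    have hrf : Partrec fun p : ℕ × ℕ =>
        Nat.rfind fun k => ((fun v => v = 0) <$>
          evalo (otbl p.1) cf (Nat.pair p.2.unpair.1 (k + p.2.unpair.2)) : Part Bool) :=
      Partrec.rfind htest.to₂
    have main := hrf.map
      ((Primrec.nat_add.comp Primrec.snd
        (Primrec.snd.comp (Primrec.unpair.comp (Primrec.snd.comp Primrec.fst)))).to_comp.to₂ :
        Computable₂ fun (p : ℕ × ℕ) (N : ℕ) => N + p.2.unpair.2)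
    exact main.of_eq fun p => by simp only [evalo_rfind', Nat.unpaired, Part.map_eq_map]

theorem nat_partrec_evalo_otbl (c : OCode) :
    Nat.Partrec (Nat.unpaired fun t n => evalo (otbl t) c n) :=
  Partrec₂.unpaired'.mpr (partrec_evalo_otbl c)

open Nat.Partrec in
/-- A (plain) code evaluating `fun (t, n) => evalo (otbl t) c n`. -/
noncomputable def evalCode (c : OCode) : Code :=
  Classical.choose (Code.exists_code.mp (nat_partrec_evalo_otbl c))

lemma evalCode_spec (c : OCode) (t n : ℕ) :
    (evalCode c).eval (Nat.pair t n) = evalo (otbl t) c n := by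
  have := Classical.choose_spec (Nat.Partrec.Code.exists_code.mp (nat_partrec_evalo_otbl c))
  rw [show Classical.choose (Nat.Partrec.Code.exists_code.mp (nat_partrec_evalo_otbl c)) =
    evalCode c from rfl] at this
  rw [this]
  simp [Nat.unpaired]

end Stage3

/-! ### Stage 4 : more `RecursiveIn` combinators -/

section Stage4

lemma pairseq_some (a b : ℕ) :
    (Nat.pair <$> Part.some a <*> Part.some b) = Part.some (Nat.pair a b) := by
  rw [part_seq_eq, Part.map_eq_map]
  simp

lemma evalo_cid (O : ℕ →. ℕ) (n : ℕ) :
    evalo O (.pair .left .right) n = Part.some n := by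
  simp only [evalo_pair, evalo_left, evalo_right]
  have : (↑(fun n : ℕ => n.unpair.1) : ℕ →. ℕ) n = Part.some n.unpair.1 := rfl
  rw [this]
  have : (↑(fun n : ℕ => n.unpair.2) : ℕ →. ℕ) n = Part.some n.unpair.2 := rfl
  rw [this, pairseq_some, Nat.pair_unpair]

theorem RecursiveIn.bindPair {O f g : ℕ →. ℕ} (hf : RecursiveIn O f) (hg : RecursiveIn O g) :
    RecursiveIn O fun n => f n >>= fun v => g (Nat.pair n v) := by
  obtain ⟨cf, hcf⟩ := hf; obtain ⟨cg, hcg⟩ := hg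
  refine ⟨.comp cg (.pair (.pair .left .right) cf), funext fun n => ?_⟩
  simp only [evalo_comp, evalo_pair, evalo_cid, hcf, hcg, Part.bind_eq_bind]
  rw [show (Nat.pair <$> Part.some n <*> f n) = (f n).map (Nat.pair n) by
    rw [part_seq_eq, Part.map_eq_map]
    simp [Part.bind_some]]
  exact Part.bind_map _ _ _

theorem RecursiveIn.comp_right {O f : ℕ →. ℕ} (hf : RecursiveIn O f) {h : ℕ → ℕ}
    (hh : Nat.Partrec fun n => Part.some (h n)) : RecursiveIn O fun n => f (h n) := by
  have := RecursiveIn.bind (RecursiveIn.of_partrec (O := O) hh) hf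
  exact this.of_eq fun n => by exact Part.bind_some _ _

theorem RecursiveIn.post {O f : ℕ →. ℕ} (hf : RecursiveIn O f) {h : ℕ → ℕ}
    (hh : Nat.Partrec fun n => Part.some (h n)) :
    RecursiveIn O fun n => (f n).map h := by
  have := RecursiveIn.bind hf (RecursiveIn.of_partrec (O := O) hh)
  exact this.of_eq fun n => by
    simp only [Part.bind_eq_bind]
    rw [← Part.bind_some_eq_map]

theorem RecursiveIn.rfindr {O f : ℕ →. ℕ} (hf : RecursiveIn O f) :
    RecursiveIn O fun n => Nat.rfind fun k => (fun x => x = 0) <$> f (Nat.pair n k) := by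
  obtain ⟨cf, hcf⟩ := hf
  refine ⟨.comp (.rfind' cf) (.pair (.pair .left .right) .zero), funext fun n => ?_⟩
  simp only [evalo_comp, evalo_pair, evalo_cid, evalo_zero, evalo_rfind', hcf,
    Part.bind_eq_bind]
  have h1 : (Nat.pair <$> Part.some n <*> (pure 0 : ℕ →. ℕ) n) = Part.some (Nat.pair n 0) := by
    have : (pure 0 : ℕ →. ℕ) n = Part.some 0 := rfl
    rw [this, pairseq_some]
  rw [h1, Part.bind_some]
  simp only [Nat.unpaired, Nat.unpair_pair]
  exact Part.map_id' (fun x => rfl) _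

theorem RecursiveIn.initseg {O : ℕ →. ℕ} {F : ℕ → ℕ} (hF : RecursiveIn O (toPFun F)) :
    RecursiveIn O fun B => Part.some (Encodable.encode (initsegO F B)) := by
  have hpost : Nat.Partrec fun w : ℕ => Part.some (Encodable.encode
      ((Denumerable.ofNat (List (Option ℕ)) w.unpair.1.unpair.2.unpair.2) ++
        [some w.unpair.2])) := by
    have : Computable fun w : ℕ => Encodable.encode
        ((Denumerable.ofNat (List (Option ℕ)) w.unpair.1.unpair.2.unpair.2) ++
          [some w.unpair.2]) := by
      apply Computable.encode.comp
      apply Computable₂.comp Computable.list_append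
      · exact (Computable.ofNat (List (Option ℕ))).comp
          ((Computable.snd.comp Computable.unpair).comp
            ((Computable.snd.comp Computable.unpair).comp
              ((Computable.fst.comp Computable.unpair))))
      · exact (Computable.list_cons.comp
          (Computable.option_some.comp (Computable.snd.comp Computable.unpair))
          (Computable.const [])).comp Computable.id
    exact Partrec.nat_iff.mp this.partrec
  have hpre : Nat.Partrec fun z : ℕ => Part.some z.unpair.2.unpair.1 := by
    have : Computable fun z : ℕ => z.unpair.2.unpair.1 :=
      Computable.fst.comp (Computable.unpair.comp (Computable.snd.comp Computable.unpair))
    exact Partrec.nat_iff.mp this.partrec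
  have hg : RecursiveIn O fun z => toPFun F z.unpair.2.unpair.1 >>= fun v =>
      Part.some (Encodable.encode ((Denumerable.ofNat (List (Option ℕ))
        z.unpair.2.unpair.2) ++ [some v])) := by
    have hb := RecursiveIn.bindPair (hF.comp_right hpre) (RecursiveIn.of_partrec hpost)
    exact hb.of_eq fun z => by
      simp only [Part.bind_eq_bind]
      congr 1
      funext v
      simp [Nat.unpair_pair]
  have hbase : RecursiveIn O fun _ : ℕ =>
      Part.some (Encodable.encode ([] : List (Option ℕ))) :=
    RecursiveIn.of_partrec (Partrec.nat_iff.mp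
      ((Computable.const (Encodable.encode ([] : List (Option ℕ)))).partrec))
  have hprec := RecursiveIn.precr hbase hg
  have hpair0 : Nat.Partrec fun n : ℕ => Part.some (Nat.pair 0 n) := by
    have : Computable fun n : ℕ => Nat.pair 0 n :=
      Primrec₂.natPair.to_comp.comp (Computable.const 0) Computable.id
    exact Partrec.nat_iff.mp this.partrec
  have hmain := hprec.comp_right hpair0
  refine hmain.of_eq fun B => ?_
  induction B with
  | zero => simp [Nat.unpaired, Nat.unpair_pair, initsegO]
  | succ B ih =>
    have step : Nat.unpaired (fun a n => n.rec
        ((fun _ : ℕ => Part.some (Encodable.encode ([] : List (Option ℕ)))) a)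
        fun y IH => IH >>= fun i => (fun z => toPFun F z.unpair.2.unpair.1 >>= fun v =>
          Part.some (Encodable.encode ((Denumerable.ofNat (List (Option ℕ))
            z.unpair.2.unpair.2) ++ [some v]))) (Nat.pair a (Nat.pair y i)))
        (Nat.pair 0 (B + 1)) =
      Nat.unpaired (fun a n => n.rec
        ((fun _ : ℕ => Part.some (Encodable.encode ([] : List (Option ℕ)))) a)
        fun y IH => IH >>= fun i => (fun z => toPFun F z.unpair.2.unpair.1 >>= fun v =>
          Part.some (Encodable.encode ((Denumerable.ofNat (List (Option ℕ))
            z.unpair.2.unpair.2) ++ [some v]))) (Nat.pair a (Nat.pair y i)))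
        (Nat.pair 0 B) >>= fun i => toPFun F B >>= fun v =>
          Part.some (Encodable.encode ((Denumerable.ofNat (List (Option ℕ))
            i) ++ [some v])) := by
      simp [Nat.unpaired, Nat.unpair_pair]
    rw [step, ih]
    simp only [Part.bind_eq_bind, Part.bind_some]
    rw [Denumerable.ofNat_encode]
    have : toPFun F B = Part.some (F B) := rfl
    rw [this, Part.bind_some]
    congr 2
    rw [initsegO, initsegO, List.range_succ, List.map_append]
    rfl

end Stage4

/-! ### Stage 5 : the pure transcript checker and its computability -/

section Stage5

open Nat.Partrec (Code)

/-- Interleave two tables into the table of their join. -/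
def joinL (a b : List (Option ℕ)) : List (Option ℕ) :=
  (List.range (2 * min a.length b.length)).map fun q =>
    if q % 2 = 0 then a.getD (q / 2) none else b.getD (q / 2) none

/-- Check a single claimed table entry against a bounded computation. -/
def entOK (c1 : Code) (K : ℕ) (t : List (Option ℕ)) (j : ℕ) (e : Option ℕ) : Bool :=
  match e with
  | none => true
  | some v => decide (Nat.Partrec.Code.evaln K c1 (Nat.pair (Encodable.encode t) j) = some v)

/-- Check all claimed entries of one level. -/
def lvlOK (c1 : Code) (K : ℕ) (t cur : List (Option ℕ)) : Bool :=
  (List.range cur.length).foldr (fun j s => entOK c1 K t j (cur.getD j none) && s) true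

/-- Check an entire guessed transcript and return the final value. -/
def runCheckA (c1 c2 : Code) (k0 K n : ℕ) (Ts : List (List (Option ℕ)))
    (Fo G0o Do : List (Option ℕ)) : Option ℕ :=
  if (decide (Ts.length = n) &&
      (List.range n).foldr
        (fun i s => lvlOK c1 K (joinL Fo ((G0o :: Ts).getD i [])) (Ts.getD i []) && s)
        true) = true
  then Nat.Partrec.Code.evaln K c2
    (Nat.pair (Encodable.encode (joinL Do ((G0o :: Ts).getD n []))) k0)
  else none

/-- Fully encoded version: `z = ⟨⟨n, ⟨B, K, ts⟩⟩, ⟨tF, t0, tD⟩⟩`. -/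
def runCheck (c1 c2 : Code) (k0 z : ℕ) : Option ℕ :=
  runCheckA c1 c2 k0
    z.unpair.1.unpair.2.unpair.2.unpair.1
    z.unpair.1.unpair.1
    (Denumerable.ofNat (List (List (Option ℕ))) z.unpair.1.unpair.2.unpair.2.unpair.2)
    (Denumerable.ofNat (List (Option ℕ)) z.unpair.2.unpair.1)
    (Denumerable.ofNat (List (Option ℕ)) z.unpair.2.unpair.2.unpair.1)
    (Denumerable.ofNat (List (Option ℕ)) z.unpair.2.unpair.2.unpair.2)

lemma joinL_primrec : Primrec₂ joinL := by
  have hf : Primrec fun p : List (Option ℕ) × List (Option ℕ) =>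
      List.range (2 * min p.1.length p.2.length) :=
    Primrec.list_range.comp (Primrec.nat_mul.comp (Primrec.const 2)
      (Primrec.nat_min.comp (Primrec.list_length.comp Primrec.fst)
        (Primrec.list_length.comp Primrec.snd)))
  have hg : Primrec₂ fun (p : List (Option ℕ) × List (Option ℕ)) (q : ℕ) =>
      if q % 2 = 0 then p.1.getD (q / 2) none else p.2.getD (q / 2) none := by
    apply Primrec.ite
    · exact PrimrecPred.comp (p := fun k : ℕ => k % 2 = 0)
        (Primrec.eq.comp (Primrec.nat_mod.comp Primrec.id (Primrec.const 2))
          (Primrec.const 0)) Primrec.snd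
    · exact (Primrec.list_getD none).comp (Primrec.fst.comp Primrec.fst)
        (Primrec.nat_div.comp Primrec.snd (Primrec.const 2))
    · exact (Primrec.list_getD none).comp (Primrec.snd.comp Primrec.fst)
        (Primrec.nat_div.comp Primrec.snd (Primrec.const 2))
  exact Primrec.list_map hf hg

lemma entOK_primrec (c1 : Code) :
    Primrec₂ fun (x : ℕ × List (Option ℕ)) (y : ℕ × Option ℕ) =>
      entOK c1 x.1 x.2 y.1 y.2 := by
  have hevaln : Primrec fun p : ((ℕ × List (Option ℕ)) × ℕ × Option ℕ) × ℕ =>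
      Nat.Partrec.Code.evaln p.1.1.1 c1 (Nat.pair (Encodable.encode p.1.1.2) p.1.2.1) :=
    Nat.Partrec.Code.primrec_evaln.comp
      (Primrec.pair (Primrec.pair (Primrec.fst.comp (Primrec.fst.comp Primrec.fst))
          (Primrec.const c1))
        (Primrec₂.natPair.comp
          (Primrec.encode.comp (Primrec.snd.comp (Primrec.fst.comp Primrec.fst)))
          (Primrec.fst.comp (Primrec.snd.comp Primrec.fst))))
  have hmain := Primrec.option_casesOn
    (o := fun x : (ℕ × List (Option ℕ)) × ℕ × Option ℕ => x.2.2)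
    (f := fun _ => (true : Bool))
    (g := fun x v => decide (Nat.Partrec.Code.evaln x.1.1 c1
      (Nat.pair (Encodable.encode x.1.2) x.2.1) = some v))
    (Primrec.snd.comp Primrec.snd) (Primrec.const true)
    (Primrec.eq.comp hevaln (Primrec.option_some.comp Primrec.snd)).decide.to₂
  exact hmain.of_eq fun x => by rcases x with ⟨⟨K, t⟩, j, e⟩; cases e <;> rfl

lemma lvlOK_primrec (c1 : Code) :
    Primrec fun x : (ℕ × List (Option ℕ)) × List (Option ℕ) =>
      lvlOK c1 x.1.1 x.1.2 x.2 := by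
  have hband : Primrec₂ (· && ·) := Primrec.dom_bool₂ _
  have h : Primrec₂ fun (x : (ℕ × List (Option ℕ)) × List (Option ℕ)) (bs : ℕ × Bool) =>
      entOK c1 x.1.1 x.1.2 bs.1 (x.2.getD bs.1 none) && bs.2 :=
    hband.comp
      ((entOK_primrec c1).comp
        (Primrec.pair (Primrec.fst.comp (Primrec.fst.comp Primrec.fst))
          (Primrec.snd.comp (Primrec.fst.comp Primrec.fst)))
        (Primrec.pair (Primrec.fst.comp Primrec.snd)
          ((Primrec.list_getD none).comp (Primrec.snd.comp Primrec.fst)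
            (Primrec.fst.comp Primrec.snd))))
      (Primrec.snd.comp Primrec.snd)
  have := Primrec.list_foldr
    (f := fun x : (ℕ × List (Option ℕ)) × List (Option ℕ) => List.range x.2.length)
    (g := fun _ => (true : Bool))
    (Primrec.list_range.comp (Primrec.list_length.comp Primrec.snd))
    (Primrec.const true) h
  exact this.of_eq fun x => rfl

/-- Structured-argument version of the checker. -/
def runCheckB (c1 c2 : Code) (k0 : ℕ)
    (x : (ℕ × ℕ) ×
      List (List (Option ℕ)) × List (Option ℕ) × List (Option ℕ) × List (Option ℕ)) :
    Option ℕ :=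
  runCheckA c1 c2 k0 x.1.1 x.1.2 x.2.1 x.2.2.1 x.2.2.2.1 x.2.2.2.2

set_option maxHeartbeats 1000000 in
lemma runCheckB_primrec (c1 c2 : Code) (k0 : ℕ) : Primrec (runCheckB c1 c2 k0) := by
  have pK : Primrec fun x : (ℕ × ℕ) ×
      List (List (Option ℕ)) × List (Option ℕ) × List (Option ℕ) × List (Option ℕ) =>
      x.1.1 := Primrec.fst.comp Primrec.fst
  have pn : Primrec fun x : (ℕ × ℕ) ×
      List (List (Option ℕ)) × List (Option ℕ) × List (Option ℕ) × List (Option ℕ) =>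
      x.1.2 := Primrec.snd.comp Primrec.fst
  have pTs : Primrec fun x : (ℕ × ℕ) ×
      List (List (Option ℕ)) × List (Option ℕ) × List (Option ℕ) × List (Option ℕ) =>
      x.2.1 := Primrec.fst.comp Primrec.snd
  have pFo : Primrec fun x : (ℕ × ℕ) ×
      List (List (Option ℕ)) × List (Option ℕ) × List (Option ℕ) × List (Option ℕ) =>
      x.2.2.1 := Primrec.fst.comp (Primrec.snd.comp Primrec.snd)
  have p0o : Primrec fun x : (ℕ × ℕ) ×
      List (List (Option ℕ)) × List (Option ℕ) × List (Option ℕ) × List (Option ℕ) =>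
      x.2.2.2.1 := Primrec.fst.comp (Primrec.snd.comp (Primrec.snd.comp Primrec.snd))
  have pDo : Primrec fun x : (ℕ × ℕ) ×
      List (List (Option ℕ)) × List (Option ℕ) × List (Option ℕ) × List (Option ℕ) =>
      x.2.2.2.2 := Primrec.snd.comp (Primrec.snd.comp (Primrec.snd.comp Primrec.snd))
  have pall := Primrec.list_cons.comp p0o pTs
  have hband : Primrec₂ (· && ·) := Primrec.dom_bool₂ _
  have hstep := hband.comp
    ((lvlOK_primrec c1).comp
      (Primrec.pair
        (Primrec.pair (pK.comp Primrec.fst)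
          (joinL_primrec.comp (pFo.comp Primrec.fst)
            ((Primrec.list_getD ([] : List (Option ℕ))).comp (pall.comp Primrec.fst)
              (Primrec.fst.comp Primrec.snd))))
        ((Primrec.list_getD ([] : List (Option ℕ))).comp (pTs.comp Primrec.fst)
          (Primrec.fst.comp Primrec.snd))))
    (Primrec.snd.comp Primrec.snd)
  have hfold := Primrec.list_foldr
    (f := fun x : (ℕ × ℕ) ×
      List (List (Option ℕ)) × List (Option ℕ) × List (Option ℕ) × List (Option ℕ) =>
      List.range x.1.2)
    (Primrec.list_range.comp pn) (Primrec.const true) hstep.to₂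
  have hcond := hband.comp (Primrec.eq.comp (Primrec.list_length.comp pTs) pn).decide hfold
  have hthen := Nat.Partrec.Code.primrec_evaln.comp
    (Primrec.pair (Primrec.pair pK (Primrec.const c2))
      (Primrec₂.natPair.comp
        (Primrec.encode.comp (joinL_primrec.comp pDo
          ((Primrec.list_getD ([] : List (Option ℕ))).comp pall pn)))
        (Primrec.const k0)))
  have hmain := Primrec.cond hcond hthen (Primrec.const (none : Option ℕ))
  refine hmain.of_eq fun x => ?_
  rw [runCheckB, runCheckA]
  rcases Bool.eq_false_or_eq_true (decide (x.2.1.length = x.1.2) &&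
    (List.range x.1.2).foldr
      (fun i s => lvlOK c1 x.1.1 (joinL x.2.2.1 ((x.2.2.2.1 :: x.2.1).getD i []))
        (x.2.1.getD i []) && s) true) with h | h <;> rw [h] <;> simp [h]

set_option maxHeartbeats 1000000 in
lemma runCheck_primrec (c1 c2 : Code) (k0 : ℕ) : Primrec (runCheck c1 c2 k0) := by
  have pu1 : Primrec fun z : ℕ => z.unpair.1 := Primrec.fst.comp Primrec.unpair
  have pu2 : Primrec fun z : ℕ => z.unpair.2 := Primrec.snd.comp Primrec.unpair
  have hdec : Primrec fun z : ℕ =>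
      ((z.unpair.1.unpair.2.unpair.2.unpair.1, z.unpair.1.unpair.1),
        (Denumerable.ofNat (List (List (Option ℕ))) z.unpair.1.unpair.2.unpair.2.unpair.2,
          Denumerable.ofNat (List (Option ℕ)) z.unpair.2.unpair.1,
          Denumerable.ofNat (List (Option ℕ)) z.unpair.2.unpair.2.unpair.1,
          Denumerable.ofNat (List (Option ℕ)) z.unpair.2.unpair.2.unpair.2)) :=
    Primrec.pair
      (Primrec.pair (pu1.comp (pu2.comp (pu2.comp pu1))) (pu1.comp pu1))
      (Primrec.pair ((Primrec.ofNat _).comp (pu2.comp (pu2.comp (pu2.comp pu1))))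
        (Primrec.pair ((Primrec.ofNat _).comp (pu1.comp pu2))
          (Primrec.pair ((Primrec.ofNat _).comp (pu1.comp (pu2.comp pu2)))
            ((Primrec.ofNat _).comp (pu2.comp (pu2.comp pu2))))))
  exact ((runCheckB_primrec c1 c2 k0).comp hdec).of_eq fun z => rfl

lemma foldr_and_eq_true_iff (p : ℕ → Bool) (l : List ℕ) :
    (l.foldr (fun j s => p j && s) true = true) ↔ ∀ j ∈ l, p j = true := by
  induction l with
  | nil => simp
  | cons a l ih => simp [Bool.and_eq_true, ih]

lemma lvlOK_iff {c1 : Code} {K : ℕ} {t cur : List (Option ℕ)} :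
    lvlOK c1 K t cur = true ↔ ∀ j v, cur.getD j none = some v →
      Nat.Partrec.Code.evaln K c1 (Nat.pair (Encodable.encode t) j) = some v := by
  rw [lvlOK, foldr_and_eq_true_iff]
  constructor
  · intro h j v hj
    by_cases hlt : j < cur.length
    · have := h j (List.mem_range.mpr hlt)
      rw [hj] at this
      exact of_decide_eq_true this
    · rw [List.getD_eq_getElem?_getD, List.getElem?_eq_none (Nat.le_of_not_lt hlt)] at hj
      cases hj
  · intro h j _
    cases he : cur.getD j none with
    | none => rw [entOK]
    | some v => rw [entOK]; exact decide_eq_true (h j v he)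

lemma runCheckA_eq_some_iff {c1 c2 : Code} {k0 K n : ℕ} {Ts : List (List (Option ℕ))}
    {Fo G0o Do : List (Option ℕ)} {w : ℕ} :
    runCheckA c1 c2 k0 K n Ts Fo G0o Do = some w ↔
      Ts.length = n ∧
      (∀ i ∈ List.range n,
        lvlOK c1 K (joinL Fo ((G0o :: Ts).getD i [])) (Ts.getD i []) = true) ∧
      Nat.Partrec.Code.evaln K c2
        (Nat.pair (Encodable.encode (joinL Do ((G0o :: Ts).getD n []))) k0) = some w := by
  rw [runCheckA]
  by_cases hc : (decide (Ts.length = n) &&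
      (List.range n).foldr
        (fun i s => lvlOK c1 K (joinL Fo ((G0o :: Ts).getD i [])) (Ts.getD i []) && s)
        true) = true
  · rw [if_pos hc]
    rw [Bool.and_eq_true, foldr_and_eq_true_iff] at hc
    exact ⟨fun h => ⟨of_decide_eq_true hc.1, hc.2, h⟩, fun h => h.2.2⟩
  · rw [if_neg hc]
    constructor
    · intro h; cases h
    · rintro ⟨h1, h2, h3⟩
      refine absurd ?_ hc
      rw [Bool.and_eq_true, foldr_and_eq_true_iff]
      exact ⟨decide_eq_true h1, h2⟩

end Stage5

/-! ### Stage 6 : sound and covering tables; the decision procedure -/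

section Stage6

open Nat.Partrec (Code)

/-- Every claimed entry of `L` is a true value of `g`. -/
def soundT (g : ℕ → ℕ) (L : List (Option ℕ)) : Prop :=
  ∀ q v, L.getD q none = some v → v = g q

/-- `L` contains all values of `g` below `m`. -/
def coverT (g : ℕ → ℕ) (m : ℕ) (L : List (Option ℕ)) : Prop :=
  ∀ q, q < m → L.getD q none = some (g q)

lemma soundT_initsegO (g : ℕ → ℕ) (l : ℕ) : soundT g (initsegO g l) := by
  intro q v hq
  rcases lt_or_ge q l with h | h
  · rw [initsegO_getD h] at hq; exact (Option.some.inj hq).symm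
  · rw [initsegO_getD_ge h] at hq; cases hq

lemma coverT_initsegO {g : ℕ → ℕ} {m l : ℕ} (h : m ≤ l) : coverT g m (initsegO g l) :=
  fun q hq => initsegO_getD (lt_of_lt_of_le hq h)

lemma initsegO_length (g : ℕ → ℕ) (l : ℕ) : (initsegO g l).length = l := by
  simp [initsegO]

lemma otblL_le_of_soundT {g : ℕ → ℕ} {L : List (Option ℕ)} (h : soundT g L) :
    OLE (otblL L) (toPFun g) := by
  intro q v hv
  rw [mem_otblL] at hv
  rw [toPFun, Part.mem_some_iff]
  exact h q v hv

lemma otblL_le_of_coverT {g : ℕ → ℕ} {m : ℕ} {L : List (Option ℕ)} (h : coverT g m L) :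
    OLE (otblL (initsegO g m)) (otblL L) := by
  intro q v hv
  rw [mem_otblL] at hv ⊢
  rcases lt_or_ge q m with h' | h'
  · rw [initsegO_getD h'] at hv
    rw [h q h']
    exact hv
  · rw [initsegO_getD_ge h'] at hv; cases hv

lemma joinL_getD_lt {a b : List (Option ℕ)} {q : ℕ} (h : q < 2 * min a.length b.length) :
    (joinL a b).getD q none =
      if q % 2 = 0 then a.getD (q / 2) none else b.getD (q / 2) none := by
  rw [joinL, List.getD_eq_getElem?_getD, List.getElem?_map, List.getElem?_range h]
  rfl

lemma joinL_getD_ge {a b : List (Option ℕ)} {q : ℕ} (h : 2 * min a.length b.length ≤ q) :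
    (joinL a b).getD q none = none := by
  rw [joinL, List.getD_eq_getElem?_getD, List.getElem?_eq_none (by simpa using h)]
  rfl

/-- Join of total functions on even/odd arguments. -/
def pjoinT (f g : ℕ → ℕ) : ℕ → ℕ := fun k => if k % 2 = 0 then f (k / 2) else g (k / 2)

lemma pjoin_toPFun (f g : ℕ → ℕ) : pjoin (toPFun f) (toPFun g) = toPFun (pjoinT f g) := by
  funext k
  simp only [pjoin, pjoinT, toPFun]
  split <;> rfl

lemma soundT_joinL {f g : ℕ → ℕ} {a b : List (Option ℕ)} (ha : soundT f a)
    (hb : soundT g b) : soundT (pjoinT f g) (joinL a b) := by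
  intro q v hq
  rcases lt_or_ge q (2 * min a.length b.length) with h | h
  · rw [joinL_getD_lt h] at hq
    simp only [pjoinT]
    by_cases hp : q % 2 = 0
    · rw [if_pos hp] at hq; rw [if_pos hp]; exact ha _ _ hq
    · rw [if_neg hp] at hq; rw [if_neg hp]; exact hb _ _ hq
  · rw [joinL_getD_ge h] at hq; cases hq

lemma coverT_joinL {f g : ℕ → ℕ} {m : ℕ} {a b : List (Option ℕ)} (ha : coverT f m a)
    (hb : coverT g m b) (hla : m ≤ a.length) (hlb : m ≤ b.length) :
    coverT (pjoinT f g) (2 * m) (joinL a b) := by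
  intro q hq
  have hmin : m ≤ min a.length b.length := le_min hla hlb
  have h : q < 2 * min a.length b.length := lt_of_lt_of_le hq (by omega)
  rw [joinL_getD_lt h]
  simp only [pjoinT]
  have hq2 : q / 2 < m := by omega
  by_cases hp : q % 2 = 0
  · rw [if_pos hp, if_pos hp, ha _ hq2]
  · rw [if_neg hp, if_neg hp, hb _ hq2]

lemma otbl_encode (L : List (Option ℕ)) : otbl (Encodable.encode L) = otblL L := by
  rw [otbl, Denumerable.ofNat_encode]

lemma evalCode_spec' (c : OCode) (L : List (Option ℕ)) (m : ℕ) :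
    (evalCode c).eval (Nat.pair (Encodable.encode L) m) = evalo (otblL L) c m := by
  rw [evalCode_spec, otbl_encode]

end Stage6

/-! ### Stage 7 : the decision procedure is recursive in the oracle -/

section Stage7

open Nat.Partrec (Code)
open Nat.Partrec.Code (evaln_sound evaln_complete evaln_mono)

/-- The three-table function available to the oracle machine. -/
def tblv (F G0 D : ℕ → ℕ) (B : ℕ) : ℕ :=
  Nat.pair (Encodable.encode (initsegO F B))
    (Nat.pair (Encodable.encode (initsegO G0 B)) (Encodable.encode (initsegO D B)))

theorem decision_recursive {O : ℕ →. ℕ} {F D G0 : ℕ → ℕ} {G : ℕ → ℕ → ℕ} {w : ℕ → ℕ} (k0 : ℕ)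
    (hF : RecursiveIn O (toPFun F)) (hD : RecursiveIn O (toPFun D))
    (hG0 : RecursiveIn O (toPFun G0)) (hG0eq : G 0 = G0)
    (hrec : ∀ n m, evalo (toPFun (pjoinT F (G n))) (OCode.ofNat (F 0)) m
      = Part.some (G (n + 1) m))
    (hw : ∀ n, evalo (toPFun (pjoinT D (G n))) (OCode.ofNat (D 0)) k0 = Part.some (w n)) :
    RecursiveIn O (toPFun w) := by
  classical
  set cF : OCode := OCode.ofNat (F 0) with hcF
  set cD : OCode := OCode.ofNat (D 0) with hcD
  set c1 : Code := evalCode cF with hc1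
  set c2 : Code := evalCode cD with hc2
  -- the oracle-computable table function
  set TBL : ℕ →. ℕ := fun B => Part.some (tblv F G0 D B) with hTBL
  have hTBLrec : RecursiveIn O TBL := by
    have h23 := RecursiveIn.pair hG0.initseg hD.initseg
    have h23' : RecursiveIn O fun B => Part.some
        (Nat.pair (Encodable.encode (initsegO G0 B)) (Encodable.encode (initsegO D B))) :=
      h23.of_eq fun B => by rw [pairseq_some]
    have h123 := RecursiveIn.pair hF.initseg h23'
    exact h123.of_eq fun B => by rw [pairseq_some]; rfl
  have hpre : Nat.Partrec fun y : ℕ => Part.some y.unpair.2.unpair.1 := by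
    have : Computable fun y : ℕ => y.unpair.2.unpair.1 :=
      Computable.fst.comp (Computable.unpair.comp (Computable.snd.comp Computable.unpair))
    exact Partrec.nat_iff.mp this.partrec
  have hTy : RecursiveIn O fun y => TBL y.unpair.2.unpair.1 := hTBLrec.comp_right hpre
  -- the test function for the search
  have hpost : Nat.Partrec fun z : ℕ =>
      Part.some (Bool.rec 1 0 (runCheck c1 c2 k0 z).isSome : ℕ) := by
    have : Computable fun z : ℕ => (Bool.rec 1 0 (runCheck c1 c2 k0 z).isSome : ℕ) := by
      have hb : Computable fun z : ℕ => (runCheck c1 c2 k0 z).isSome :=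
        Primrec.option_isSome.to_comp.comp (runCheck_primrec c1 c2 k0).to_comp
      exact (Computable.cond hb (Computable.const 0) (Computable.const 1)).of_eq fun z => by
        cases h : (runCheck c1 c2 k0 z).isSome <;> simp [h]
    exact Partrec.nat_iff.mp this.partrec
  set testf : ℕ →. ℕ := fun y => TBL y.unpair.2.unpair.1 >>= fun tb =>
    Part.some (Bool.rec 1 0 (runCheck c1 c2 k0 (Nat.pair y tb)).isSome : ℕ) with htestf
  have htest : RecursiveIn O testf := by
    have := RecursiveIn.bindPair hTy (RecursiveIn.of_partrec (O := O) hpost)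
    exact this.of_eq fun y => rfl
  have hrf := htest.rfindr
  -- the output function
  have hofo : Nat.Partrec fun z : ℕ => Part.ofOption (runCheck c1 c2 k0 z) :=
    Partrec.nat_iff.mp ((runCheck_primrec c1 c2 k0).to_comp.ofOption)
  have hout : RecursiveIn O fun y => TBL y.unpair.2.unpair.1 >>= fun tb =>
      Part.ofOption (runCheck c1 c2 k0 (Nat.pair y tb)) := by
    have := RecursiveIn.bindPair hTy (RecursiveIn.of_partrec (O := O) hofo)
    exact this.of_eq fun y => rfl
  have hP := RecursiveIn.bindPair hrf hout
  refine hP.of_eq fun n => ?_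
  -- It remains to prove correctness of the search at `n`.
  -- Soundness of the checker:
  have claimA : ∀ u v, runCheck c1 c2 k0 (Nat.pair (Nat.pair n u) (tblv F G0 D u.unpair.1))
      = some v → v = w n := by
    intro u v hv
    rw [runCheck] at hv
    simp only [Nat.unpair_pair, tblv] at hv
    rw [Denumerable.ofNat_encode, Denumerable.ofNat_encode, Denumerable.ofNat_encode] at hv
    set B := u.unpair.1 with hB
    set K := u.unpair.2.unpair.1 with hK
    set Ts := Denumerable.ofNat (List (List (Option ℕ))) u.unpair.2.unpair.2 with hTs
    rw [runCheckA_eq_some_iff] at hv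
    obtain ⟨hlen, hlvl, hfin⟩ := hv
    have sound_all : ∀ i, i ≤ n → soundT (G i) ((initsegO G0 B :: Ts).getD i []) := by
      intro i
      induction i with
      | zero =>
        intro _
        rw [List.getD_cons_zero, hG0eq]
        exact soundT_initsegO G0 B
      | succ i ih =>
        intro hin
        have hprev := ih (Nat.le_of_succ_le hin)
        have hil := hlvl i (List.mem_range.mpr (Nat.lt_of_succ_le hin))
        rw [lvlOK_iff] at hil
        rw [List.getD_cons_succ]
        intro q v' hq
        have hev := hil q v' hq
        have hmem : v' ∈ Nat.Partrec.Code.evaln K c1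
            (Nat.pair (Encodable.encode (joinL (initsegO F B) ((initsegO G0 B :: Ts).getD i [])))
              q) := Option.mem_def.mpr hev
        have h1 := evaln_sound hmem
        rw [hc1, evalCode_spec'] at h1
        have h2 := evalo_mono (otblL_le_of_soundT
          (soundT_joinL (soundT_initsegO F B) hprev)) cF q v' h1
        rw [hrec i q] at h2
        exact Part.mem_some_iff.mp h2
    have hsTn := sound_all n le_rfl
    have hmem : v ∈ Nat.Partrec.Code.evaln K c2
        (Nat.pair (Encodable.encode (joinL (initsegO D B) ((initsegO G0 B :: Ts).getD n [])))
          k0) := Option.mem_def.mpr hfin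
    have h1 := evaln_sound hmem
    rw [hc2, evalCode_spec'] at h1
    have h2 := evalo_mono (otblL_le_of_soundT
      (soundT_joinL (soundT_initsegO D B) hsTn)) cD k0 v h1
    rw [hw n] at h2
    exact Part.mem_some_iff.mp h2
  -- Completeness of the checker:
  have claimB : ∃ u, (runCheck c1 c2 k0
      (Nat.pair (Nat.pair n u) (tblv F G0 D u.unpair.1))).isSome = true := by
    -- compactness bounds
    have Hl : ∀ i j, ∃ l, G (i + 1) j ∈ evalo (otblL (initsegO (pjoinT F (G i)) l)) cF j := by
      intro i j
      apply evalo_compact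
      rw [hrec i j]
      exact Part.mem_some _
    choose lf hlf using Hl
    have Hw : ∃ l, w n ∈ evalo (otblL (initsegO (pjoinT D (G n)) l)) cD k0 := by
      apply evalo_compact
      rw [hw n]
      exact Part.mem_some _
    obtain ⟨lfin, hlfin⟩ := Hw
    -- downward recursion on required lengths: `M k` is the bound for level `n - k`
    set M : ℕ → ℕ := fun k => Nat.rec lfin
      (fun k Mk => (Finset.range Mk).sup (fun j => lf (n - k - 1) j)) k with hM
    have hM0 : M 0 = lfin := rfl
    have hMsucc : ∀ k, M (k + 1) = (Finset.range (M k)).sup (fun j => lf (n - k - 1) j) :=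
      fun k => rfl
    set B := (Finset.range (n + 1)).sup M + 1 with hBdef
    have hMB : ∀ k, k ≤ n → M k ≤ B := by
      intro k hk
      have h1 : M k ≤ (Finset.range (n + 1)).sup M :=
        Finset.le_sup (Finset.mem_range.mpr (by omega))
      omega
    -- the staircase tables
    set stair : ℕ → List (Option ℕ) := fun i =>
      (List.range B).map (fun j => if j < M (n - i) then some (G i j) else none) with hstair
    have stair_getD_lt : ∀ i j, j < B →
        (stair i).getD j none = if j < M (n - i) then some (G i j) else none := by
      intro i j hj
      rw [hstair]
      rw [List.getD_eq_getElem?_getD, List.getElem?_map, List.getElem?_range hj]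
      rfl
    have stair_getD_ge : ∀ i j, B ≤ j → (stair i).getD j none = none := by
      intro i j hj
      rw [hstair, List.getD_eq_getElem?_getD, List.getElem?_eq_none (by simpa using hj)]
      rfl
    have stair_len : ∀ i, (stair i).length = B := by intro i; rw [hstair]; simp
    have stair_sound : ∀ i, soundT (G i) (stair i) := by
      intro i q v hq
      rcases lt_or_ge q B with h | h
      · rw [stair_getD_lt i q h] at hq
        split at hq
        · exact (Option.some.inj hq).symm
        · cases hq
      · rw [stair_getD_ge i q h] at hq; cases hq
    have stair_cover : ∀ i, M (n - i) ≤ B → coverT (G i) (M (n - i)) (stair i) := by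
      intro i hMBi q hq
      rw [stair_getD_lt i q (lt_of_lt_of_le hq hMBi), if_pos hq]
    set Ts : List (List (Option ℕ)) := (List.range n).map (fun i' => stair (i' + 1)) with hTs
    have hTslen : Ts.length = n := by rw [hTs]; simp
    have hTsget : ∀ i, i < n → Ts.getD i [] = stair (i + 1) := by
      intro i hi
      rw [hTs, List.getD_eq_getElem?_getD, List.getElem?_map, List.getElem?_range hi]
      rfl
    -- the previous-level tables
    set prevT : ℕ → List (Option ℕ) := fun i => (initsegO G0 B :: Ts).getD i [] with hprevT
    have hprev0 : prevT 0 = initsegO G0 B := rfl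
    have hprevS : ∀ i, i < n → prevT (i + 1) = stair (i + 1) := by
      intro i hi
      simp only [hprevT, List.getD_cons_succ]
      exact hTsget i hi
    have prev_cover : ∀ i, i ≤ n → coverT (G i) (M (n - i)) (prevT i) := by
      intro i hi
      cases i with
      | zero =>
        rw [hprev0, hG0eq]
        exact coverT_initsegO (hMB _ (Nat.sub_le n 0))
      | succ i =>
        rw [hprevS i (Nat.lt_of_succ_le hi)]
        exact stair_cover (i + 1) (hMB _ (Nat.sub_le n (i + 1)))
    have prev_len : ∀ i, i ≤ n → M (n - i) ≤ (prevT i).length := by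
      intro i hi
      cases i with
      | zero => rw [hprev0, initsegO_length]; exact hMB _ (Nat.sub_le n 0)
      | succ i => rw [hprevS i (Nat.lt_of_succ_le hi), stair_len]; exact hMB _ (Nat.sub_le n _)
    -- the needed entries evaluate correctly (unbounded version)
    have Hev : ∀ i j, i < n → j < M (n - i - 1) →
        G (i + 1) j ∈ c1.eval
          (Nat.pair (Encodable.encode (joinL (initsegO F B) (prevT i))) j) := by
      intro i j hi hj
      rw [hc1, evalCode_spec']
      have hlfle : lf i j ≤ 2 * M (n - i) := by
        have harith : n - (n - i - 1) - 1 = i := by omega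
        have := Finset.le_sup (f := fun j => lf (n - (n - i - 1) - 1) j)
          (Finset.mem_range.mpr hj)
        rw [harith] at this
        have h2 : M (n - i - 1 + 1) = (Finset.range (M (n - i - 1))).sup (fun j => lf i j) := by
          rw [hMsucc (n - i - 1), harith]
        have h3 : n - i - 1 + 1 = n - i := by omega
        rw [h3] at h2
        calc lf i j ≤ M (n - i) := by rw [h2]; exact this
        _ ≤ 2 * M (n - i) := by omega
      have hcov : coverT (pjoinT F (G i)) (2 * M (n - i)) (joinL (initsegO F B) (prevT i)) :=
        coverT_joinL (coverT_initsegO (hMB _ (Nat.sub_le n i)))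
          (prev_cover i (le_of_lt hi))
          (by rw [initsegO_length]; exact hMB _ (Nat.sub_le n i))
          (prev_len i (le_of_lt hi))
      have hole : OLE (otblL (initsegO (pjoinT F (G i)) (lf i j)))
          (otblL (joinL (initsegO F B) (prevT i))) := by
        intro q v hv
        have h1 := otblL_initseg_mono (pjoinT F (G i)) hlfle q v hv
        exact otblL_le_of_coverT hcov q v h1
      exact evalo_mono hole cF j _ (hlf i j)
    -- choose fuels
    have Hev' : ∀ i j, ∃ k, i < n → j < M (n - i - 1) →
        Nat.Partrec.Code.evaln k c1
          (Nat.pair (Encodable.encode (joinL (initsegO F B) (prevT i))) j)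
          = some (G (i + 1) j) := by
      intro i j
      by_cases h : i < n ∧ j < M (n - i - 1)
      · obtain ⟨k, hk⟩ := evaln_complete.mp (Hev i j h.1 h.2)
        exact ⟨k, fun _ _ => hk⟩
      · exact ⟨0, fun h1 h2 => absurd ⟨h1, h2⟩ h⟩
    choose Kf hKf using Hev'
    -- the final computation
    have Hfin : w n ∈ c2.eval
        (Nat.pair (Encodable.encode (joinL (initsegO D B) (prevT n))) k0) := by
      rw [hc2, evalCode_spec']
      have hM0B : M 0 ≤ B := hMB 0 (Nat.zero_le n)
      have hnn : n - n = 0 := Nat.sub_self n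
      have hcov : coverT (pjoinT D (G n)) (2 * M 0) (joinL (initsegO D B) (prevT n)) :=
        coverT_joinL (coverT_initsegO hM0B)
          (by have := prev_cover n le_rfl; rwa [hnn] at this)
          (by rw [initsegO_length]; exact hM0B)
          (by have := prev_len n le_rfl; rwa [hnn] at this)
      have hole : OLE (otblL (initsegO (pjoinT D (G n)) lfin))
          (otblL (joinL (initsegO D B) (prevT n))) := by
        intro q v hv
        have hlfle : lfin ≤ 2 * M 0 := by rw [hM0]; omega
        have h1 := otblL_initseg_mono (pjoinT D (G n)) hlfle q v hv
        exact otblL_le_of_coverT hcov q v h1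
      exact evalo_mono hole cD k0 _ hlfin
    obtain ⟨Kfin, hKfin⟩ := evaln_complete.mp Hfin
    set K := max ((Finset.range n).sup fun i => (Finset.range B).sup fun j => Kf i j) Kfin
      with hKdef
    have hKFle : ∀ i j, i < n → j < B → Kf i j ≤ K := by
      intro i j hi hj
      have h1 := Finset.le_sup (f := fun j => Kf i j) (Finset.mem_range.mpr hj)
      have h2 := Finset.le_sup (f := fun i => (Finset.range B).sup fun j => Kf i j)
        (Finset.mem_range.mpr hi)
      exact le_trans (le_trans h1 h2) (le_max_left _ _)
    refine ⟨Nat.pair B (Nat.pair K (Encodable.encode Ts)), ?_⟩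
    rw [runCheck]
    simp only [Nat.unpair_pair, tblv]
    rw [Denumerable.ofNat_encode, Denumerable.ofNat_encode, Denumerable.ofNat_encode,
      Denumerable.ofNat_encode]
    have hsome : runCheckA c1 c2 k0 K n Ts (initsegO F B) (initsegO G0 B) (initsegO D B)
        = some (w n) := by
      rw [runCheckA_eq_some_iff]
      refine ⟨hTslen, ?_, ?_⟩
      · intro i hi
        have hin : i < n := List.mem_range.mp hi
        rw [lvlOK_iff]
        intro j v hj
        rw [hTsget i hin] at hj
        rcases lt_or_ge j B with hjB | hjB
        · rw [stair_getD_lt (i + 1) j hjB] at hj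
          split at hj
          next hjM =>
            have hv : v = G (i + 1) j := (Option.some.inj hj).symm
            subst hv
            have harith : n - (i + 1) = n - i - 1 := by omega
            rw [harith] at hjM
            have := Option.mem_def.mpr (hKf i j hin hjM)
            exact Option.mem_def.mp (evaln_mono (hKFle i j hin hjB) this)
          next => cases hj
        · rw [stair_getD_ge (i + 1) j hjB] at hj; cases hj
      · exact Option.mem_def.mp (evaln_mono (le_max_right _ _) hKfin)
    rw [hsome]
    rfl
  -- Use the claims to compute the value of the search.
  obtain ⟨u₁, hu₁⟩ := claimB
  have htestval : ∀ u, testf (Nat.pair n u) =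
      Part.some (Bool.rec 1 0 (runCheck c1 c2 k0
        (Nat.pair (Nat.pair n u) (tblv F G0 D u.unpair.1))).isSome : ℕ) := by
    intro u
    rw [htestf]
    simp only [Nat.unpair_pair, hTBL]
    rw [Part.bind_eq_bind, Part.bind_some]
  have hdom : (Nat.rfind fun k => (fun x => x = 0) <$> testf (Nat.pair n k)).Dom := by
    refine Nat.rfind_dom.2 ?_
    refine ⟨u₁, ?_, ?_⟩
    · rw [htestval u₁, hu₁]
      exact (mem_fmap_iff _).2 ⟨0, Part.mem_some _, by simp⟩
    · intro m _
      rw [htestval m]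
      simp [Part.map_eq_map]
  have hu₀mem := Part.get_mem hdom
  set u₀ := (Nat.rfind fun k => (fun x => x = 0) <$> testf (Nat.pair n k)).get hdom with hu₀
  have hspec := Nat.rfind_spec hu₀mem
  have hisSome : (runCheck c1 c2 k0
      (Nat.pair (Nat.pair n u₀) (tblv F G0 D u₀.unpair.1))).isSome = true := by
    rw [htestval u₀] at hspec
    rcases (mem_fmap_iff _).1 hspec with ⟨v, hv, hdec⟩
    have hv0 : v = 0 := of_decide_eq_true hdec
    have hveq := Part.mem_some_iff.mp hv
    cases hb : (runCheck c1 c2 k0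
        (Nat.pair (Nat.pair n u₀) (tblv F G0 D u₀.unpair.1))).isSome with
    | false => rw [hb] at hveq; rw [hv0] at hveq; cases hveq
    | true => rfl
  obtain ⟨v, hv⟩ := Option.isSome_iff_exists.mp hisSome
  have hvw : v = w n := claimA u₀ v hv
  have : toPFun w n = Part.some (w n) := rfl
  rw [this]
  refine Part.eq_some_iff.mpr ?_
  rw [Part.bind_eq_bind]
  refine Part.mem_bind_iff.mpr ⟨u₀, hu₀mem, ?_⟩
  show w n ∈ TBL (Nat.pair n u₀).unpair.2.unpair.1 >>= fun tb =>
    Part.ofOption (runCheck c1 c2 k0 (Nat.pair (Nat.pair n u₀) tb))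
  simp only [Nat.unpair_pair]
  rw [show TBL u₀.unpair.1 = Part.some (tblv F G0 D u₀.unpair.1) from rfl, Part.bind_eq_bind,
    Part.bind_some]
  rw [hv, hvw]
  exact Part.mem_ofOption.mpr rfl

end Stage7

/-! ### Stage 8 : Kleene's second model, membership lemmas and special elements -/

section Stage8

lemma mem_partToTotal {ψ : ℕ →. ℕ} {g : ℕ → ℕ} :
    g ∈ partToTotal ψ ↔ ∀ m, ψ m = Part.some (g m) := by
  constructor
  · rintro ⟨H, rfl⟩
    intro m
    exact (Part.some_get (H m)).symm
  · intro H
    refine ⟨fun m => ?_, funext fun m => ?_⟩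
    · rw [H m]; trivial
    · exact Part.get_eq_of_mem (by rw [H m]; exact Part.mem_some _) _

lemma mem_k2App {g h v : ℕ → ℕ} :
    v ∈ k2App g h ↔
      ∀ m, evalo (toPFun (pjoinT g h)) (OCode.ofNat (g 0)) m = Part.some (v m) := by
  rw [k2App, mem_partToTotal]
  constructor
  · intro H m; have := H m; rwa [phi, pjoin_toPFun] at this
  · intro H m; have := H m; rwa [phi, pjoin_toPFun]

lemma mem_subApp_iff {α : Type} {app : α → α → Part α} {P : α → Prop} {a b c : Subtype P} :
    c ∈ subApp app P a b ↔ c.1 ∈ app a.1 b.1 := by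
  rw [subApp]
  constructor
  · intro hc
    obtain ⟨x, hx, hc⟩ := Part.mem_bind_iff.mp hc
    obtain ⟨hp, hc⟩ := Part.mem_assert_iff.mp hc
    have hcx := Part.mem_some_iff.mp hc
    subst hcx
    exact hx
  · intro hc
    refine Part.mem_bind_iff.mpr ⟨c.1, hc, ?_⟩
    exact Part.mem_assert_iff.mpr ⟨c.2, Part.mem_some_iff.mpr rfl⟩

/-- An oracle code for a given partial recursive function. -/
noncomputable def codeFor (f : ℕ →. ℕ) (h : Nat.Partrec f) : OCode :=
  toOCode (Classical.choose (Nat.Partrec.Code.exists_code.mp h))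

lemma codeFor_spec (O f : ℕ →. ℕ) (h : Nat.Partrec f) : evalo O (codeFor f h) = f := by
  rw [codeFor, evalo_toOCode]
  exact Classical.choose_spec (Nat.Partrec.Code.exists_code.mp h)

lemma nat_partrec_total {f : ℕ → ℕ} (h : Computable f) :
    Nat.Partrec fun n => Part.some (f n) :=
  Partrec.nat_iff.mp (h.partrec.of_eq fun n => rfl)

lemma odd_partrec : Nat.Partrec fun m : ℕ => Part.some (2 * m + 1) :=
  nat_partrec_total ((Primrec.nat_add.comp
    (Primrec.nat_mul.comp (Primrec.const 2) Primrec.id) (Primrec.const 1)).to_comp)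

lemma two_partrec : Nat.Partrec fun m : ℕ => Part.some (2 * m + 2) :=
  nat_partrec_total ((Primrec.nat_add.comp
    (Primrec.nat_mul.comp (Primrec.const 2) Primrec.id) (Primrec.const 2)).to_comp)

lemma const_partrec (k : ℕ) : Nat.Partrec fun _ : ℕ => Part.some k :=
  nat_partrec_total (Computable.const k)

/-- Code for the "successor" element of `K₂`. -/
noncomputable def scCode : OCode :=
  .comp .succ (.comp .oracle (codeFor _ odd_partrec))

/-- The successor element of `K₂` : `sc ⬝ h = fun m => h m + 1`. -/
noncomputable def scFn : ℕ → ℕ := fun k => if k = 0 then encodeOCode scCode else 0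

/-- The constant element of `K₂`. -/
def constFn (n : ℕ) : ℕ → ℕ := fun _ => n

lemma scFn_recursive (O : ℕ →. ℕ) : RecursiveIn O (toPFun scFn) :=
  RecursiveIn.of_partrec (nat_partrec_total
    ((Primrec.ite (Primrec.eq.comp Primrec.id (Primrec.const 0))
      (Primrec.const (encodeOCode scCode)) (Primrec.const 0)).to_comp))

lemma constFn_recursive (O : ℕ →. ℕ) (n : ℕ) : RecursiveIn O (toPFun (constFn n)) :=
  RecursiveIn.of_partrec (nat_partrec_total (Computable.const n))

lemma pf_bind_some (a : ℕ) (f : ℕ →. ℕ) : Part.some a >>= f = f a := Part.bind_some a f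

lemma codeFor_spec_app (O f : ℕ →. ℕ) (h : Nat.Partrec f) (n : ℕ) :
    evalo O (codeFor f h) n = f n := congrFun (codeFor_spec O f h) n

lemma coe_pfun_eval (f : ℕ → ℕ) (n : ℕ) : (↑f : ℕ →. ℕ) n = Part.some (f n) := rfl

lemma k2App_scFn (hfn : ℕ → ℕ) : (fun m => hfn m + 1) ∈ k2App scFn hfn := by
  rw [mem_k2App]
  intro m
  have h0 : scFn 0 = encodeOCode scCode := if_pos rfl
  rw [h0, ofNat_encodeOCode]
  rw [scCode]
  simp only [evalo_comp, Part.bind_eq_bind]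
  simp only [codeFor_spec_app _ _ odd_partrec]
  simp only [pf_bind_some]
  simp only [evalo_oracle]
  have hj : toPFun (pjoinT scFn hfn) (2 * m + 1) = Part.some (hfn m) := by
    rw [toPFun, pjoinT]
    have h1 : (2 * m + 1) % 2 = 1 := by omega
    have h2 : (2 * m + 1) / 2 = m := by omega
    rw [h1, h2]
    simp
  simp only [hj, pf_bind_some, evalo_succ, coe_pfun_eval]

/-- The characteristic function of `X` with values in `{0,1}`. -/
noncomputable def chiFn (X : Set ℕ) : ℕ → ℕ := fun n => X.indicator (fun _ => 1) n

lemma chi_eq_some (X : Set ℕ) (n : ℕ) : chi X n = Part.some (chiFn X n) := rfl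

/-- Code for the decision element. -/
noncomputable def dCode : OCode :=
  .comp .oracle (.comp (codeFor _ two_partrec) (.comp .oracle (codeFor _ (const_partrec 1))))

/-- The decision element of `K₂^X` : `chiHat X ⬝ (const n) = const (chiFn X n)`. -/
noncomputable def chiHat (X : Set ℕ) : ℕ → ℕ := fun k =>
  if k = 0 then encodeOCode dCode else chiFn X (k - 1)

lemma chiHat_recursive (X : Set ℕ) : RecursiveIn (chi X) (toPFun (chiHat X)) := by
  obtain ⟨cED, hcED⟩ : ∃ c, evalo (chi X) c = fun _ : ℕ => Part.some (encodeOCode dCode) :=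
    RecursiveIn.of_partrec (const_partrec (encodeOCode dCode))
  refine ⟨.comp (.prec cED (.comp .oracle (.comp .left .right)))
    (.pair .zero (.pair .left .right)), funext fun k => ?_⟩
  have hin : evalo (chi X) (.pair .zero (.pair .left .right)) k = Part.some (Nat.pair 0 k) := by
    simp only [evalo_pair, evalo_zero, evalo_cid]
    have : (pure 0 : ℕ →. ℕ) k = Part.some 0 := rfl
    rw [this, pairseq_some]
  simp only [evalo_comp, Part.bind_eq_bind]
  simp only [hin, pf_bind_some]
  have key : ∀ j, evalo (chi X) (.prec cED (.comp .oracle (.comp .left .right)))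
      (Nat.pair 0 j) = Part.some (chiHat X j) := by
    intro j
    induction j with
    | zero =>
      rw [evalo_prec_zero, hcED]
      rfl
    | succ y ih =>
      rw [evalo_prec_succ, ih, Part.bind_eq_bind, Part.bind_some]
      simp only [evalo_comp, evalo_oracle, evalo_left, evalo_right, Part.bind_eq_bind]
      simp only [coe_pfun_eval, pf_bind_some]
      simp only [Nat.unpair_pair]
      rw [chi_eq_some]
      have : chiHat X (y + 1) = chiFn X y := by
        simp only [chiHat, Nat.succ_ne_zero, if_false]
        simp
      rw [this]
  exact key k

lemma k2App_chiHat (X : Set ℕ) (n : ℕ) :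
    constFn (chiFn X n) ∈ k2App (chiHat X) (constFn n) := by
  rw [mem_k2App]
  intro m
  have h0 : chiHat X 0 = encodeOCode dCode := if_pos rfl
  rw [h0, ofNat_encodeOCode, dCode]
  simp only [evalo_comp, Part.bind_eq_bind, evalo_oracle, codeFor_spec_app _ _ (const_partrec 1),
    pf_bind_some]
  simp only [show toPFun (pjoinT (chiHat X) (constFn n)) 1 = Part.some n from rfl]
  simp only [pf_bind_some, codeFor_spec_app _ _ two_partrec]
  have e4 : toPFun (pjoinT (chiHat X) (constFn n)) (2 * n + 2) = Part.some (chiFn X n) := by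
    rw [toPFun]
    have h1 : (2 * n + 2) % 2 = 0 := by omega
    have h2 : (2 * n + 2) / 2 = n + 1 := by omega
    simp only [pjoinT]
    rw [if_pos h1, h2]
    simp only [chiHat, Nat.succ_ne_zero, if_false]
    simp
  exact e4

end Stage8

theorem stmt8 (X Y : Set ℕ) :
    (∃ f : K2el X → K2el Y, IsPCAEmbedding (k2XApp X) (k2XApp Y) f) ↔
      TuringLE X Y := by
  constructor
  · rintro ⟨f, hinj, happ⟩
    set scE : K2el X := ⟨scFn, scFn_recursive _⟩ with hscE
    set chE : K2el X := ⟨chiHat X, chiHat_recursive X⟩ with hchE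
    set cE : ℕ → K2el X := fun n => ⟨constFn n, constFn_recursive _ n⟩ with hcE
    set Ffun : ℕ → ℕ := (f scE).1 with hFfun
    set Dfun : ℕ → ℕ := (f chE).1 with hDfun
    set G : ℕ → ℕ → ℕ := fun n => (f (cE n)).1 with hG
    have happ1 : ∀ n : ℕ, (cE (n + 1)).1 ∈ k2App scFn (constFn n) := fun n =>
      k2App_scFn (constFn n)
    have hrec : ∀ n m, evalo (toPFun (pjoinT Ffun (G n))) (OCode.ofNat (Ffun 0)) m =
        Part.some (G (n + 1) m) := by
      intro n
      have h1 : cE (n + 1) ∈ k2XApp X scE (cE n) := mem_subApp_iff.mpr (happ1 n)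
      have h3 := mem_subApp_iff.mp (happ _ _ _ h1)
      exact mem_k2App.mp h3
    have hw0 : ∀ n m, evalo (toPFun (pjoinT Dfun (G n))) (OCode.ofNat (Dfun 0)) m =
        Part.some (G (chiFn X n) m) := by
      intro n
      have h1 : cE (chiFn X n) ∈ k2XApp X chE (cE n) :=
        mem_subApp_iff.mpr (k2App_chiHat X n)
      have h3 := mem_subApp_iff.mp (happ _ _ _ h1)
      exact mem_k2App.mp h3
    have hne : G 0 ≠ G 1 := by
      intro h
      have h2 : cE 0 = cE 1 := hinj (Subtype.ext h)
      have h3 : constFn 0 = constFn 1 := congrArg Subtype.val h2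
      have h4 : (0 : ℕ) = 1 := congrFun h3 0
      exact absurd h4 (by omega)
    obtain ⟨k0, hk0⟩ := Function.ne_iff.mp hne
    have hrecw := decision_recursive (O := chi Y) (G := G)
      (w := fun n => G (chiFn X n) k0) k0 (f scE).2 (f chE).2 (f (cE 0)).2 rfl hrec
      (fun n => hw0 n k0)
    have hpost : Nat.Partrec fun v : ℕ => Part.some (if v = G 1 k0 then 1 else 0) :=
      nat_partrec_total ((Primrec.ite (Primrec.eq.comp Primrec.id (Primrec.const (G 1 k0)))
        (Primrec.const 1) (Primrec.const 0)).to_comp)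
    have hcomp := RecursiveIn.bind hrecw (RecursiveIn.of_partrec hpost)
    refine hcomp.of_eq fun n => ?_
    rw [show toPFun (fun n => G (chiFn X n) k0) n = Part.some (G (chiFn X n) k0) from rfl,
      Part.bind_eq_bind, Part.bind_some, chi_eq_some]
    congr 1
    by_cases hx : n ∈ X
    · have h1 : chiFn X n = 1 := by
        simp only [chiFn]
        exact Set.indicator_of_mem hx _
      rw [h1, if_pos rfl]
    · have h1 : chiFn X n = 0 := by
        simp only [chiFn]
        exact Set.indicator_of_notMem hx _
      rw [h1, if_neg hk0]
  · intro hTLE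
    refine ⟨fun g => ⟨g.1, g.2.trans hTLE⟩, ?_, ?_⟩
    · intro a b h
      have h2 := congrArg (fun e : K2el Y => e.1) h
      exact Subtype.ext h2
    · intro a a' c hc
      have h1 := mem_subApp_iff.mp hc
      exact mem_subApp_iff.mpr h1

end PCAEmb
end

section
/- Let A and A' be pcas and let f : A ↪ A' be an embedding of pcas. If ≤ is a partial order on A' under which application is monotone (i.e., if a ≤ b and c ≤ d and a·c and b·d are defined, then a·c ≤ b·d), then the range of f contains two elements that are incomparable with respect to ≤. -/
/-!
If `k` and `k̄ := k·(s·k·k)` are the two projections, `k·a·b = a` and `k̄·a·b = b`, then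
monotonicity of application turns `k ≤ k̄` into `a ≤ b` for all `a, b`, and `k̄ ≤ k` into
`b ≤ a`; either way antisymmetry collapses the pca to a point, contradicting `s ≠ k`.
Pulled back along the injective, application-preserving `f`, the order of `A'` is a partial
order on `A` under which application is monotone, so `f k` and `f k̄` are incomparable.
-/

namespace PCAEmb

def AppMonotone {α : Type*} (app : α → α → Part α) (r : α → α → Prop) : Prop :=
  ∀ a b c d x y : α, r a b → r c d → x ∈ app a c → y ∈ app b d → r x y

section Application

variable {α : Type*} {app : α → α → Part α}

theorem app2_eq_app_of_mem {a b x : α} (hx : x ∈ app a b) (c : α) :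
    app2 app a b c = app x c := by
  rw [app2, Part.eq_some_iff.2 hx, Part.bind_some]

theorem app3_eq_app_of_mem {a b c x : α} (hx : x ∈ app2 app a b c) (d : α) :
    app3 app a b c d = app x d := by
  rw [app3, Part.eq_some_iff.2 hx, Part.bind_some]

theorem exists_mem_app_of_app2_eq_some {a b c d : α} (h : app2 app a b c = Part.some d) :
    ∃ x ∈ app a b, d ∈ app x c :=
  Part.mem_bind_iff.1 (show d ∈ app2 app a b c from h ▸ Part.mem_some d)

theorem AppMonotone.app2 {r : α → α → Prop} (hmono : AppMonotone app r)
    {a a' b b' c c' x y : α} (ha : r a a') (hb : r b b') (hc : r c c')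
    (hx : x ∈ app2 app a b c) (hy : y ∈ app2 app a' b' c') : r x y := by
  obtain ⟨u, hu, hxu⟩ := Part.mem_bind_iff.1 hx
  obtain ⟨v, hv, hyv⟩ := Part.mem_bind_iff.1 hy
  exact hmono _ _ _ _ _ _ (hmono _ _ _ _ _ _ ha hb hu hv) hc hxu hyv

theorem AppMonotone.comap {β : Type*} {appB : β → β → Part β} {r : β → β → Prop}
    (hmono : AppMonotone appB r) {f : α → β} (hf : IsPCAEmbedding app appB f) :
    AppMonotone app (Function.onFun r f) :=
  fun _ _ _ _ _ _ hab hcd hx hy => hmono _ _ _ _ _ _ hab hcd (hf.2 _ _ _ hx) (hf.2 _ _ _ hy)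

end Application

namespace IsPCA

variable {α : Type*} {app : α → α → Part α}

theorem nontrivial (hA : IsPCA app) : Nontrivial α :=
  let ⟨s, k, hsk, _⟩ := hA
  ⟨⟨s, k, hsk⟩⟩

theorem exists_left_projection (hA : IsPCA app) :
    ∃ t : α, ∀ a b : α, app2 app t a b = Part.some a :=
  let ⟨_, k, _, hk, _⟩ := hA
  ⟨k, hk⟩

theorem exists_identity (hA : IsPCA app) : ∃ i : α, ∀ a : α, app i a = Part.some a := by
  obtain ⟨s, k, -, hk, hsdom, hs⟩ := hA
  refine ⟨(app2 app s k k).get (hsdom k k), fun a => ?_⟩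
  obtain ⟨x, hx, -⟩ := exists_mem_app_of_app2_eq_some (hk a a)
  rw [← app3_eq_app_of_mem (Part.get_mem (hsdom k k)) a, hs, Part.eq_some_iff.2 hx,
    Part.bind_some, Part.bind_some, ← app2_eq_app_of_mem hx, hk]

theorem exists_right_projection (hA : IsPCA app) :
    ∃ t : α, ∀ a b : α, app2 app t a b = Part.some b := by
  obtain ⟨i, hi⟩ := hA.exists_identity
  obtain ⟨k, hk⟩ := hA.exists_left_projection
  obtain ⟨t, ht, -⟩ := exists_mem_app_of_app2_eq_some (hk i i)
  refine ⟨t, fun a b => ?_⟩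
  rw [app2, ← app2_eq_app_of_mem ht, hk, Part.bind_some, hi]

theorem exists_incomparable (hA : IsPCA app) {r : α → α → Prop} [Std.Refl r] [Std.Antisymm r]
    (hmono : AppMonotone app r) : ∃ u v : α, ¬ r u v ∧ ¬ r v u := by
  have := hA.nontrivial
  obtain ⟨k, hk⟩ := hA.exists_left_projection
  obtain ⟨k', hk'⟩ := hA.exists_right_projection
  have collapse (h : ∀ a b : α, r a b) : False :=
    let ⟨a, b, hab⟩ := exists_pair_ne α
    hab (antisymm_of r (h a b) (h b a))
  have app2_le {u v : α} (huv : r u v) {a b x y : α} (hx : x ∈ app2 app u a b)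
      (hy : y ∈ app2 app v a b) : r x y :=
    hmono.app2 huv (refl_of r a) (refl_of r b) hx hy
  refine ⟨k, k', fun h => collapse fun a b => ?_, fun h => collapse fun a b => ?_⟩
  · exact app2_le h (hk a b ▸ Part.mem_some a) (hk' a b ▸ Part.mem_some b)
  · exact app2_le h (hk' b a ▸ Part.mem_some a) (hk b a ▸ Part.mem_some b)

end IsPCA

theorem stmt11_general (α β : Type*) (appA : α → α → Part α) (appB : β → β → Part β)
    (hA : IsPCA appA)
    (f : α → β) (hf : IsPCAEmbedding appA appB f)
    (le : β → β → Prop) (hpo : IsPartialOrder β le)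
    (hmono : ∀ a b c d x y : β,
      le a b → le c d → x ∈ appB a c → y ∈ appB b d → le x y) :
    ∃ u v : α, ¬ le (f u) (f v) ∧ ¬ le (f v) (f u) :=
  have := hf.1.antisymm_onFun (r := le)
  hA.exists_incomparable (AppMonotone.comap hmono hf)

theorem stmt11 (α β : Type*) (appA : α → α → Part α) (appB : β → β → Part β)
    (hA : IsPCA appA) (hB : IsPCA appB)
    (f : α → β) (hf : IsPCAEmbedding appA appB f)
    (le : β → β → Prop) (hpo : IsPartialOrder β le)
    (hmono : ∀ a b c d x y : β,
      le a b → le c d → x ∈ appB a c → y ∈ appB b d → le x y) :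
    ∃ u v : α, ¬ le (f u) (f v) ∧ ¬ le (f v) (f u) :=
  stmt11_general α β appA appB hA f hf le hpo hmono

end PCAEmb
end
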